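/- Lemma 4.1(1) (energies of a one-soliton state): fix n ≥ 3, one of the three admissible κ, and a length l ≥ 1 with a label 1 ≤ i_1 ≤ i_2 ≤ ⋯ ≤ i_l ≤ n−2. For a ≥ 0 let p be the state that equals vac at every site except p_{a+j} for j = 1, …, l, where in the right-soliton case p_{a+j} = (i_j+1) ⊗ n̄ (for κ = Rotateleft or Switch_{1n}) resp. p_{a+j} = (i_j+2) ⊗ 2̄ (for κ = Switch_{12}), and in the left-soliton case p_{a+j} = 1 ⊗ \overline{i_{l+1−j}+1} (for κ = Rotateleft or Switch_{1n}) resp. p_{a+j} = 1 ⊗ \overline{i_{l+1−j}+2} (for κ = Switch_{12}). Then, provided the soliton is surrounded by sufficiently many vacuum sites (i.e. there exists a₀, depending on n, l, k and the label, such that the following holds for all a ≥ a₀), one has E_k(p) = min(k, l) for every k ≥ 1. -/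
import Mathlib


/- Common setup: crystals `B_l`, `B∨_l` for `U_q(sl_n^)`, combinatorial `R`, `R∨`, `R∨∨`
and the combinatorial `K` maps, following Kuniba–Okado–Yamada,
"Box-Ball System with Reflecting End".  Elements of `B_l` (and of `B∨_l`) are encoded as
integer-valued vectors indexed by `ZMod n` (coordinates read modulo `n`), membership in
`B_l` being expressed by the predicate `memB l`.  The affinization `Aff(B_l)` is encoded
as `ℤ × (ZMod n → ℤ)`, the pair `(d, x)` standing for `z^d x`. -/

namespace BBS

abbrev V (n : ℕ) := ZMod n → ℤ

variable {n : ℕ}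

/-- The candidate (for `k+1`, `0 ≤ k ≤ n-1`) in the minimum defining `Q_i(x,y)`:
`Σ_{j=1}^{k} x_{i+j} + Σ_{j=k+2}^{n} y_{i+j}`. -/
def Qt (x y : V n) (i : ZMod n) (k : ℕ) : ℤ :=
  (∑ j ∈ Finset.range k, x (i + (j : ZMod n) + 1)) +
    ∑ j ∈ Finset.Ico (k + 1) n, y (i + (j : ZMod n) + 1)

/-- `Qe x y i = Q_i(x,y) = min_{1 ≤ k ≤ n} ( Σ_{j=1}^{k−1} x_{i+j} + Σ_{j=k+1}^{n} y_{i+j} )`. -/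
def Qe (x y : V n) (i : ZMod n) : ℤ :=
  Finset.fold min (Qt x y i 0) (Qt x y i) (Finset.Ico 1 n)

/-- `Pe x y i = P_i(x,y) = min(x_{i+1}, y_{i+1})`. -/
def Pe (x y : V n) (i : ZMod n) : ℤ := min (x (i + 1)) (y (i + 1))

/-- Classical combinatorial `R : B_l ⊗ B_m → B_m ⊗ B_l`, `(x,y) ↦ (ỹ,x̃)`. -/
def Rbar (x y : V n) : V n × V n :=
  (fun i => y i + Qe x y (i - 1) - Qe x y i, fun i => x i + Qe x y i - Qe x y (i - 1))

/-- Classical combinatorial `R∨ : B_l ⊗ B∨_m → B∨_m ⊗ B_l`, `(x,y) ↦ (ỹ,x̃)`. -/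
def Rvbar (x y : V n) : V n × V n :=
  (fun i => y i + Pe x y i - Pe x y (i - 1), fun i => x i + Pe x y i - Pe x y (i - 1))

/-- Classical combinatorial `R∨∨ : B∨_l ⊗ B∨_m → B∨_m ⊗ B∨_l`, `(x,y) ↦ (ỹ,x̃)`. -/
def Rvvbar (x y : V n) : V n × V n :=
  (fun i => y i + Qe y x i - Qe y x (i - 1), fun i => x i + Qe y x (i - 1) - Qe y x i)

/-- The affinization: `(d, x)` stands for `z^d x`. -/
abbrev Aff (n : ℕ) := ℤ × V n

/-- Affine combinatorial `R`: `z^d x ⊗ z^e y ↦ z^{e−Q₀(x,y)} ỹ ⊗ z^{d+Q₀(x,y)} x̃`. -/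
def Raff (p : Aff n × Aff n) : Aff n × Aff n :=
  ((p.2.1 - Qe p.1.2 p.2.2 0, (Rbar p.1.2 p.2.2).1),
    (p.1.1 + Qe p.1.2 p.2.2 0, (Rbar p.1.2 p.2.2).2))

/-- Affine combinatorial `R∨`: `z^d x ⊗ z^e y ↦ z^{e−P₀(x,y)} ỹ ⊗ z^{d+P₀(x,y)} x̃`. -/
def Rvee (p : Aff n × Aff n) : Aff n × Aff n :=
  ((p.2.1 - Pe p.1.2 p.2.2 0, (Rvbar p.1.2 p.2.2).1),
    (p.1.1 + Pe p.1.2 p.2.2 0, (Rvbar p.1.2 p.2.2).2))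

/-- Affine combinatorial `R∨∨`: `z^d x ⊗ z^e y ↦ z^{e−Q₀(y,x)} ỹ ⊗ z^{d+Q₀(y,x)} x̃`. -/
def Rvv (p : Aff n × Aff n) : Aff n × Aff n :=
  ((p.2.1 - Qe p.2.2 p.1.2 0, (Rvvbar p.1.2 p.2.2).1),
    (p.1.1 + Qe p.2.2 p.1.2 0, (Rvvbar p.1.2 p.2.2).2))

/-- `κ =` Rotateleft: `κ(x) = (x_2, …, x_n, x_1)`. -/
def rotL (x : V n) : V n := fun i => x (i + 1)

/-- `I` for Rotateleft: `I(x) = −x_1`. -/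
def Irot (x : V n) : ℤ := -x 1

/-- `κ =` Switch₁ₙ (`n` even): exchanges the coordinate pairs
`(x_1,x_n), (x_2,x_3), (x_4,x_5), …, (x_{n−2},x_{n−1})`. -/
def sw1n (x : V n) : V n := fun i => if i.val % 2 = 1 then x (i - 1) else x (i + 1)

/-- `I` for Switch₁ₙ: `I(x) = x_n − x_1`. -/
def I1n (x : V n) : ℤ := x 0 - x 1

/-- `κ =` Switch₁₂ (`n` even): exchanges the coordinate pairs
`(x_1,x_2), (x_3,x_4), …, (x_{n−1},x_n)`. -/
def sw12 (x : V n) : V n := fun i => if i.val % 2 = 1 then x (i + 1) else x (i - 1)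

/-- `I` for Switch₁₂: `I(x) = 0`. -/
def I12 (_ : V n) : ℤ := 0

/-- Combinatorial `K : Aff(B_l) → Aff(B∨_l)`, `z^d x ↦ z^{−d+I(x)} κ(x)`. -/
def Kmap (κ : V n → V n) (I : V n → ℤ) (q : Aff n) : Aff n := (-q.1 + I q.2, κ q.2)

/-- Combinatorial `K∨ : Aff(B∨_l) → Aff(B_l)`, `z^d x ↦ z^{−d−I(x)} κ(x)`. -/
def Kvmap (κ : V n → V n) (I : V n → ℤ) (q : Aff n) : Aff n := (-q.1 - I q.2, κ q.2)

/-- `K₂`: apply `K` to the second tensor factor. -/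
def K2 (κ : V n → V n) (I : V n → ℤ) (p : Aff n × Aff n) : Aff n × Aff n :=
  (p.1, Kmap κ I p.2)

/-- `K∨₁`: apply `K∨` to the first tensor factor. -/
def Kv1 (κ : V n → V n) (I : V n → ℤ) (p : Aff n × Aff n) : Aff n × Aff n :=
  (Kvmap κ I p.1, p.2)

/-- `x ∈ B_l` (equivalently `x ∈ B∨_l`): all coordinates nonnegative, summing to `l`. -/
def memB (l : ℕ) (x : V n) : Prop :=
  (∀ i, 0 ≤ x i) ∧ (∑ j ∈ Finset.range n, x (j : ZMod n)) = (l : ℤ)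

end BBS

namespace BBS

/-- The letter `s ∈ {1, …, n}` of `B_1` (resp. `s̄` of `B∨_1`) as a unit vector. -/
def eLet (s : ℕ) : V n := fun a => if a = (s : ZMod n) then 1 else 0

/-- The highest element `u_l = (l, 0, …, 0) ∈ B_l`. -/
def uVec (l : ℕ) : V n := fun i => if i = 1 then (l : ℤ) else 0

/-- The vacuum local state `vac = 1 ⊗ κ(1) ∈ B = B_1 ⊗ B∨_1`. -/
def vacOf (κ : V n → V n) : V n × V n := (eLet 1, κ (eLet 1))

/-- One step of the right-moving (downward) pass at a site `b = s ⊗ t` with incoming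
carrier `c`: `(s†, v♯) = ōR(c, s)`, `(t†, v_next) = ōR∨(v♯, t)`; returns `((s†, t†), v_next)`. -/
def stepRfull (c : V n) (b : V n × V n) : (V n × V n) × V n :=
  (((Rbar c b.1).1, (Rvbar (Rbar c b.1).2 b.2).1), (Rvbar (Rbar c b.1).2 b.2).2)

/-- `vCar p u N m`: the carrier of the downward pass after processing `m` sites, starting
as `u` above site `N−1` and moving toward the wall (sites are indexed `0, 1, 2, …` with
site `0` adjacent to the reflecting end). -/
def vCar (p : ℕ → V n × V n) (u : V n) (N : ℕ) : ℕ → V n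
  | 0 => u
  | m + 1 => (stepRfull (vCar p u N m) (p (N - 1 - m))).2

/-- `pdag p u N k`: the intermediate state `p†_k` produced by the downward pass. -/
def pdag (p : ℕ → V n × V n) (u : V n) (N : ℕ) (k : ℕ) : V n × V n :=
  (stepRfull (vCar p u N (N - 1 - k)) (p k)).1

/-- One step of the left-moving (upward) pass at a site `b = s† ⊗ t†` with incoming
carrier `w`: `(w♯, t') = ōR∨∨(t†, w)`, `(w_next, s') = ōR∨(s†, w♯)`;
returns `((s', t'), w_next)`. -/
def stepLfull (w : V n) (b : V n × V n) : (V n × V n) × V n :=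
  (((Rvbar b.1 (Rvvbar b.2 w).1).2, (Rvvbar b.2 w).2), (Rvbar b.1 (Rvvbar b.2 w).1).1)

/-- `wCar q w0 k`: the carrier of the upward pass entering site `k`, starting as
`w0 = κ(v)` at the wall. -/
def wCar (q : ℕ → V n × V n) (w0 : V n) : ℕ → V n
  | 0 => w0
  | k + 1 => (stepLfull (wCar q w0 k) (q k)).2

/-- The double row construction computed with cutoff `N` (all sites `≥ N` vacuum). -/
def TlAux (κ : V n → V n) (l : ℕ) (p : ℕ → V n × V n) (N : ℕ) (k : ℕ) : V n × V n :=
  (stepLfull (wCar (pdag p (uVec l) N) (κ (vCar p (uVec l) N N)) k)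
    (pdag p (uVec l) N k)).1

/-- The time evolution `T_l : 𝒫 → 𝒫` (double row construction); by the results of the
paper it does not depend on the choice of the admissible cutoff `N`. -/
noncomputable def Tl (κ : V n → V n) (l : ℕ) (p : ℕ → V n × V n) : ℕ → V n × V n :=
  haveI := Classical.propDecidable (∃ N, ∀ k, N ≤ k → p k = vacOf κ)
  if h : ∃ N, ∀ k, N ≤ k → p k = vacOf κ then TlAux κ l p h.choose else p

/-- `p` is a state of the semi-infinite automaton: every local state lies in
`B = B_1 ⊗ B∨_1` and all but finitely many local states are the vacuum. -/
def IsState (κ : V n → V n) (p : ℕ → V n × V n) : Prop :=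
  (∀ k, memB 1 (p k).1 ∧ memB 1 (p k).2) ∧ ∃ N, ∀ k, N ≤ k → p k = vacOf κ

/-- The summand at site `k` in the conserved quantity `E_l` (formula (3.4)):
`Q₀(v_k, s_k) + P₀(v♯_k, t_k) + Q₀(w_k, t†_k) + P₀(w♯_k, s†_k)`, computed with cutoff `N`. -/
def Eterm (κ : V n → V n) (l : ℕ) (p : ℕ → V n × V n) (N : ℕ) (k : ℕ) : ℤ :=
  let vk := vCar p (uVec l) N (N - 1 - k)
  let vsharp := (Rbar vk (p k).1).2
  let q := pdag p (uVec l) N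
  let wk := wCar q (κ (vCar p (uVec l) N N)) k
  let wsharp := (Rvvbar (q k).2 wk).1
  Qe vk (p k).1 0 + Pe vsharp (p k).2 0 + Qe wk (q k).2 0 + Pe wsharp (q k).1 0

/-- The conserved quantity `E_l(p)` (formula (3.4)):
`E_l(p) = Σ_{k≥1} [Q₀(v_k,s_k) + P₀(v♯_k,t_k) + Q₀(w_k,t†_k) + P₀(w♯_k,s†_k)] − I(v) + I(u_l)`,
where all but finitely many summands vanish (so the partial sums stabilize). -/
noncomputable def El (κ : V n → V n) (I : V n → ℤ) (l : ℕ) (p : ℕ → V n × V n) : ℤ :=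
  haveI := Classical.propDecidable (∃ N, ∀ k, N ≤ k → p k = vacOf κ)
  if h : ∃ N, ∀ k, N ≤ k → p k = vacOf κ then
    haveI := Classical.propDecidable (∃ M : ℕ, ∀ M', M ≤ M' →
      (∑ k ∈ Finset.range M', Eterm κ l p h.choose k) =
        ∑ k ∈ Finset.range M, Eterm κ l p h.choose k)
    (if h2 : ∃ M : ℕ, ∀ M', M ≤ M' →
          (∑ k ∈ Finset.range M', Eterm κ l p h.choose k) =
            ∑ k ∈ Finset.range M, Eterm κ l p h.choose k then
        ∑ k ∈ Finset.range h2.choose, Eterm κ l p h.choose k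
      else 0)
      - I (vCar p (uVec l) h.choose h.choose) + I (uVec l)
  else 0

/-- The three admissible pairs `(κ, I)`. -/
def Admissible (κ : V n → V n) (I : V n → ℤ) : Prop :=
  (κ = rotL ∧ I = Irot) ∨ (Even n ∧ κ = sw1n ∧ I = I1n) ∨ (Even n ∧ κ = sw12 ∧ I = I12)

-- ===================== auxiliary development =====================

section Found

variable {n : ℕ}

lemma eLet_nonneg (s : ℕ) (i : ZMod n) : 0 ≤ eLet s i := by
  unfold eLet; split <;> norm_num

lemma mod_small {a : ℕ} (h1 : 1 ≤ a) (h2 : a ≤ n) : a % n = if a = n then 0 else a := by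
  rcases eq_or_lt_of_le h2 with rfl | h
  · simp
  · rw [Nat.mod_eq_of_lt h, if_neg (by omega)]

lemma natCast_inj_of (hn : 1 ≤ n) {a b : ℕ} (ha1 : 1 ≤ a) (han : a ≤ n) (hb1 : 1 ≤ b)
    (hbn : b ≤ n) : ((a : ZMod n) = (b : ZMod n)) ↔ a = b := by
  haveI : NeZero n := ⟨by omega⟩
  rw [ZMod.natCast_eq_natCast_iff]
  unfold Nat.ModEq
  rw [mod_small ha1 han, mod_small hb1 hbn]
  split_ifs <;> omega

lemma cast_add_n (b : ℕ) : ((b + n : ℕ) : ZMod n) = (b : ZMod n) := by push_cast; simp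

lemma eLet_congr {a b : ℕ} (h : (a : ZMod n) = (b : ZMod n)) : (eLet a : V n) = eLet b := by
  funext z; unfold eLet; rw [h]

lemma eLet_apply_eq (a : ℕ) : eLet a ((a : ZMod n)) = 1 := by unfold eLet; simp

lemma eLet_apply_ne {a : ℕ} {z : ZMod n} (h : z ≠ (a : ZMod n)) : eLet a z = 0 := by
  unfold eLet; simp [h]

end Found

section QeSingle

variable {n : ℕ}

/-- The master computation: `Q_i(x, e_S)` when the carrier `x` is zero on the `d−1`
coordinates cyclically below `S` and positive at distance `d`. -/
lemma Qe_single (hn : 3 ≤ n) (x : V n) (hx : ∀ i, 0 ≤ x i) (S d : ℕ)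
    (hS1 : 1 ≤ S) (hSn : S ≤ n) (hd1 : 1 ≤ d) (hdn : d ≤ n)
    (hzero : ∀ t : ℕ, 1 ≤ t → t < d → x ((S : ZMod n) - (t : ZMod n)) = 0)
    (hpos : 1 ≤ x ((S : ZMod n) - (d : ZMod n))) (i : ZMod n) :
    Qe x (eLet S) i = if d ≤ ((S : ZMod n) - i - 1).val then 1 else 0 := by
  haveI : NeZero n := ⟨by omega⟩
  set j0 := ((S : ZMod n) - i - 1).val with hj0
  have hj0n : j0 < n := ZMod.val_lt _
  have hcast : ((j0 : ZMod n)) = (S : ZMod n) - i - 1 := by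
    simp [hj0, ZMod.natCast_val, ZMod.cast_id]
  -- the `y`-part of each candidate
  have hy : ∀ m : ℕ, (∑ j ∈ Finset.Ico (m + 1) n, eLet S (i + (j : ZMod n) + 1)) =
      if m + 1 ≤ j0 then 1 else 0 := by
    intro m
    have hterm : ∀ j ∈ Finset.Ico (m + 1) n,
        eLet S (i + (j : ZMod n) + 1) = if j = j0 then 1 else 0 := by
      intro j hj
      simp only [Finset.mem_Ico] at hj
      have hiff : (i + (j : ZMod n) + 1 = (S : ZMod n)) ↔ j = j0 := by
        constructor
        · intro h
          have : (j : ZMod n) = ((j0 : ZMod n)) := by rw [hcast]; linear_combination h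
          have := congrArg ZMod.val this
          rwa [ZMod.val_cast_of_lt hj.2, ZMod.val_cast_of_lt hj0n] at this
        · intro h
          subst h
          linear_combination hcast
      unfold eLet
      simp only [hiff]
    rw [Finset.sum_congr rfl hterm, Finset.sum_ite_eq' (Finset.Ico (m + 1) n) j0 (fun _ => (1 : ℤ))]
    simp only [Finset.mem_Ico]
    congr 1
    simp [hj0n]
  -- rewriting the `x`-terms through the hypotheses
  have hterm : ∀ j : ℕ, j < j0 → x (i + (j : ZMod n) + 1) =
      x ((S : ZMod n) - ((j0 - j : ℕ) : ZMod n)) := by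
    intro j hj
    congr 1
    rw [Nat.cast_sub hj.le]
    push_cast
    linear_combination hcast
  have hQt0 : ∀ m : ℕ, 0 ≤ Qt x (eLet S) i m := by
    intro m
    apply add_nonneg
    · exact Finset.sum_nonneg fun j _ => hx _
    · exact Finset.sum_nonneg fun j _ => eLet_nonneg _ _
  by_cases hcase : d ≤ j0
  · -- value 1
    rw [if_pos hcase]
    have hbase : Qt x (eLet S) i 0 = 1 := by
      unfold Qt
      rw [hy 0]
      simp only [Finset.range_zero, Finset.sum_empty, zero_add]
      rw [if_pos (by omega)]
    apply le_antisymm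
    · rw [Qe, Finset.fold_min_le]
      exact Or.inl (le_of_eq hbase)
    · rw [Qe, Finset.le_fold_min]
      refine ⟨le_of_eq hbase.symm, ?_⟩
      intro m hm
      simp only [Finset.mem_Ico] at hm
      by_cases hmj : m + 1 ≤ j0
      · unfold Qt
        rw [hy m, if_pos hmj]
        have := Finset.sum_nonneg (fun j (_ : j ∈ Finset.range m) => hx (i + (j : ZMod n) + 1))
        omega
      · -- m ≥ j0 ≥ d : the x-sum contains x (S - d)
        unfold Qt
        have hmem : j0 - d ∈ Finset.range m := by
          simp only [Finset.mem_range]; omega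
        have hsingle : x (i + ((j0 - d : ℕ) : ZMod n) + 1) ≤
            ∑ j ∈ Finset.range m, x (i + (j : ZMod n) + 1) :=
          Finset.single_le_sum (fun j _ => hx _) hmem
        have hxd : x (i + ((j0 - d : ℕ) : ZMod n) + 1) = x ((S : ZMod n) - (d : ZMod n)) := by
          rw [hterm (j0 - d) (by omega), Nat.sub_sub_self hcase]
        have hy' := hy m
        have := Finset.sum_nonneg (fun j (_ : j ∈ Finset.Ico (m+1) n) => eLet_nonneg S (i + (j : ZMod n) + 1))
        have hp2 : (1:ℤ) ≤ x (i + ((j0 - d : ℕ) : ZMod n) + 1) := by rw [hxd]; exact hpos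
        have h1 := le_trans hp2 hsingle
        omega
  · -- value 0
    rw [if_neg hcase]
    have hzero' : ∀ m : ℕ, m ≤ j0 → (∑ j ∈ Finset.range m, x (i + (j : ZMod n) + 1)) = 0 := by
      intro m hm
      apply Finset.sum_eq_zero
      intro j hj
      simp only [Finset.mem_range] at hj
      rw [hterm j (by omega)]
      exact hzero (j0 - j) (by omega) (by omega)
    have hQtj0 : Qt x (eLet S) i j0 = 0 := by
      unfold Qt
      rw [hy j0, if_neg (by omega), hzero' j0 le_rfl]
      norm_num
    apply le_antisymm
    · rw [Qe, Finset.fold_min_le]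
      rcases Nat.eq_zero_or_pos j0 with h0 | h0
      · exact Or.inl (le_of_eq (h0 ▸ hQtj0))
      · exact Or.inr ⟨j0, by simp only [Finset.mem_Ico]; omega, le_of_eq hQtj0⟩
    · rw [Qe, Finset.le_fold_min]
      exact ⟨hQt0 0, fun m _ => hQt0 m⟩

end QeSingle
section Steps

variable {n : ℕ}

lemma val_sub_one' [NeZero n] {z : ZMod n} (hz : z ≠ 0) : (z - 1).val = z.val - 1 := by
  have h1 : 1 ≤ z.val := by
    rcases Nat.eq_zero_or_pos z.val with h | h
    · exact absurd ((ZMod.val_eq_zero z).1 h) hz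
    · exact h
  have hzv : ((z.val : ℕ) : ZMod n) = z := by simp [ZMod.natCast_val, ZMod.cast_id]
  have : z - 1 = ((z.val - 1 : ℕ) : ZMod n) := by
    rw [Nat.cast_sub h1, hzv]; push_cast; ring
  rw [this, ZMod.val_cast_of_lt (by have := ZMod.val_lt z; omega)]

lemma val_neg_one' (hn : 3 ≤ n) : ((-1 : ZMod n)).val = n - 1 := by
  haveI : NeZero n := ⟨by omega⟩
  have : (-1 : ZMod n) = ((n - 1 : ℕ) : ZMod n) := by
    rw [Nat.cast_sub (by omega : 1 ≤ n)]
    simp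
  rw [this, ZMod.val_cast_of_lt (by omega)]

lemma cast_eq_zero_iff' (hn : 3 ≤ n) {d : ℕ} (hd1 : 1 ≤ d) (hdn : d ≤ n) :
    ((d : ZMod n) = 0) ↔ d = n := by
  haveI : NeZero n := ⟨by omega⟩
  rw [ZMod.natCast_eq_zero_iff]
  constructor
  · intro h; exact le_antisymm hdn (Nat.le_of_dvd (by omega) h)
  · rintro rfl; exact dvd_rfl

lemma Qdiff (hn : 3 ≤ n) (x : V n) (hx : ∀ i, 0 ≤ x i) (S d : ℕ)
    (hS1 : 1 ≤ S) (hSn : S ≤ n) (hd1 : 1 ≤ d) (hdn : d ≤ n)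
    (hzero : ∀ t : ℕ, 1 ≤ t → t < d → x ((S : ZMod n) - (t : ZMod n)) = 0)
    (hpos : 1 ≤ x ((S : ZMod n) - (d : ZMod n))) (i : ZMod n) :
    Qe x (eLet S) i - Qe x (eLet S) (i - 1) = eLet S i - eLet (S + n - d) i := by
  haveI : NeZero n := ⟨by omega⟩
  have hQ := Qe_single hn x hx S d hS1 hSn hd1 hdn hzero hpos
  rw [hQ i, hQ (i - 1)]
  have e1 : (S : ZMod n) - i - 1 = ((S : ZMod n) - i) - 1 := by ring
  have e2 : (S : ZMod n) - (i - 1) - 1 = (S : ZMod n) - i := by ring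
  rw [e1, e2]
  set z : ZMod n := (S : ZMod n) - i with hzdef
  have hSnd : ((S + n - d : ℕ) : ZMod n) = (S : ZMod n) - (d : ZMod n) := by
    rw [Nat.cast_sub (by omega : d ≤ S + n)]
    push_cast
    simp
  have hcondS : (i = ((S : ℕ) : ZMod n)) ↔ z = 0 := by
    rw [hzdef, sub_eq_zero, eq_comm]
  have hcondD : (i = ((S + n - d : ℕ) : ZMod n)) ↔ z = (d : ZMod n) := by
    rw [hSnd, hzdef]
    constructor
    · intro h; rw [h]; ring
    · intro h; linear_combination -h
  unfold eLet
  simp only [hcondS, hcondD]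
  by_cases hz : z = 0
  · simp only [if_pos hz, hz]
    rw [show ((0:ZMod n) - 1) = -1 from by ring, val_neg_one' hn, ZMod.val_zero]
    by_cases hdn' : d = n
    · rw [if_pos (show (0:ZMod n) = (d : ZMod n) from ((cast_eq_zero_iff' hn hd1 hdn).2 hdn').symm)]
      rw [if_neg (by omega : ¬ d ≤ n - 1), if_neg (by omega : ¬ d ≤ 0)]
      norm_num
    · rw [if_neg (show ¬ (0:ZMod n) = (d : ZMod n) from
        fun h => hdn' ((cast_eq_zero_iff' hn hd1 hdn).1 h.symm))]
      rw [if_pos (by omega : d ≤ n - 1), if_neg (by omega : ¬ d ≤ 0)]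
      norm_num
  · have hzv1 : 1 ≤ z.val := by
      rcases Nat.eq_zero_or_pos z.val with h | h
      · exact absurd ((ZMod.val_eq_zero z).1 h) hz
      · exact h
    have hzvn : z.val < n := ZMod.val_lt z
    have hcd : (z = (d : ZMod n)) ↔ z.val = d := by
      by_cases hdn' : d = n
      · constructor
        · intro h
          exfalso
          apply hz
          rw [h, hdn']
          exact_mod_cast ZMod.natCast_self n
        · intro h; exfalso; omega
      · constructor
        · intro h; rw [h, ZMod.val_cast_of_lt (by omega)]
        · intro h
          have hzv : ((z.val : ℕ) : ZMod n) = z := by simp [ZMod.natCast_val, ZMod.cast_id]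
          rw [← hzv, h]
    simp only [if_neg hz, val_sub_one' hz, hcd]
    split_ifs <;> omega

/-- Packaged single-letter step: the combinatorial `R` (and `R∨∨`) against a letter. -/
lemma Rstep (hn : 3 ≤ n) (x : V n) (hx : ∀ i, 0 ≤ x i) (S d : ℕ)
    (hS1 : 1 ≤ S) (hSn : S ≤ n) (hd1 : 1 ≤ d) (hdn : d ≤ n)
    (hzero : ∀ t : ℕ, 1 ≤ t → t < d → x ((S : ZMod n) - (t : ZMod n)) = 0)
    (hpos : 1 ≤ x ((S : ZMod n) - (d : ZMod n))) :
    Rbar x (eLet S) = (eLet (S + n - d), fun i => x i + eLet S i - eLet (S + n - d) i) ∧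
    Rvvbar (eLet S) x = ((fun i => x i + eLet S i - eLet (S + n - d) i), eLet (S + n - d)) ∧
    Qe x (eLet S) 0 = if d < S then 1 else 0 := by
  haveI : NeZero n := ⟨by omega⟩
  have hD := Qdiff hn x hx S d hS1 hSn hd1 hdn hzero hpos
  refine ⟨?_, ?_, ?_⟩
  · simp only [Rbar, Prod.mk.injEq]
    constructor <;> funext i <;> have := hD i <;> linarith
  · simp only [Rvvbar, Prod.mk.injEq]
    constructor <;> funext i <;> have := hD i <;> linarith
  · rw [Qe_single hn x hx S d hS1 hSn hd1 hdn hzero hpos 0]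
    have : ((S : ZMod n) - 0 - 1) = ((S - 1 : ℕ) : ZMod n) := by
      rw [Nat.cast_sub hS1]; push_cast; ring
    rw [this, ZMod.val_cast_of_lt (by omega)]
    apply if_congr (by omega) rfl rfl

lemma Rv_id (x y : V n) (h : ∀ i, min (x i) (y i) = 0) :
    Rvbar x y = (y, x) ∧ Pe x y 0 = 0 := by
  have hPe : ∀ i : ZMod n, Pe x y i = 0 := fun i => h (i + 1)
  constructor
  · simp only [Rvbar, Prod.mk.injEq]
    constructor <;> funext i <;> rw [hPe, hPe] <;> ring
  · exact hPe 0

end Steps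
section Car

variable {n : ℕ}

/-- A carrier shape: `r` balls of letter `β` plus one ball of letter `L j` for each
`j ∈ [u, v)`. -/
def carf (L : ℕ → ℕ) (β r u v : ℕ) : V n :=
  fun z => (r : ℤ) * eLet β z + ∑ j ∈ Finset.Ico u v, eLet (L j) z

lemma carf_nonneg (L : ℕ → ℕ) (β r u v : ℕ) (z : ZMod n) : 0 ≤ carf L β r u v z := by
  unfold carf
  apply add_nonneg
  · exact mul_nonneg (by positivity) (eLet_nonneg _ _)
  · exact Finset.sum_nonneg fun j _ => eLet_nonneg _ _

lemma carf_apply_zero (hn : 3 ≤ n) (L : ℕ → ℕ) (β r u v m : ℕ)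
    (hm1 : 1 ≤ m) (hmn : m ≤ n) (hβ : r = 0 ∨ ¬ ((m : ZMod n) = (β : ZMod n)))
    (hLm : ∀ j, u ≤ j → j < v → ¬ ((m : ZMod n) = ((L j : ℕ) : ZMod n))) :
    carf L β r u v ((m : ZMod n)) = 0 := by
  unfold carf
  have h2 : (∑ j ∈ Finset.Ico u v, eLet (L j) ((m : ZMod n))) = 0 := by
    apply Finset.sum_eq_zero
    intro j hj
    simp only [Finset.mem_Ico] at hj
    exact eLet_apply_ne (hLm j hj.1 hj.2)
  rw [h2, add_zero]
  rcases hβ with h | h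
  · rw [h]; ring
  · rw [eLet_apply_ne h]; ring

lemma carf_apply_beta (L : ℕ → ℕ) (β r u v : ℕ) :
    (r : ℤ) ≤ carf L β r u v ((β : ZMod n)) := by
  unfold carf
  have := Finset.sum_nonneg fun j (_ : j ∈ Finset.Ico u v) => eLet_nonneg (L j) ((β : ZMod n))
  rw [eLet_apply_eq]
  omega

lemma carf_apply_letter (L : ℕ → ℕ) (β r u v j0 : ℕ) (hj : u ≤ j0 ∧ j0 < v) :
    (1 : ℤ) ≤ carf L β r u v ((L j0 : ℕ) : ZMod n) := by
  unfold carf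
  have h1 : eLet (L j0) (((L j0 : ℕ) : ZMod n)) ≤ ∑ j ∈ Finset.Ico u v, eLet (L j) ((L j0 : ℕ) : ZMod n) := by
    apply Finset.single_le_sum (fun j _ => eLet_nonneg (L j) _)
    simp only [Finset.mem_Ico]
    exact hj
  rw [eLet_apply_eq] at h1
  have := mul_nonneg (show (0:ℤ) ≤ (r:ℤ) by positivity) (eLet_nonneg β ((L j0 : ℕ) : ZMod n))
  omega

lemma carf_empty (L : ℕ → ℕ) (β r u : ℕ) :
    (carf L β r u u : V n) = fun z => (r : ℤ) * eLet β z := by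
  funext z; unfold carf; simp

lemma carf_empty' (L L' : ℕ → ℕ) (β r u u' : ℕ) :
    (carf L β r u u : V n) = carf L' β r u' u' := by
  rw [carf_empty, carf_empty]

lemma uVec_eq_carf (L : ℕ → ℕ) (k u : ℕ) : (uVec k : V n) = carf L 1 k u u := by
  rw [carf_empty]
  funext z
  unfold uVec eLet
  rw [Nat.cast_one]
  split <;> ring

/-- Absorb a letter at the bottom of the window. -/
lemma carf_absorb (L : ℕ → ℕ) (β r u v : ℕ) (hu : 1 ≤ u) (huv : u ≤ v) :
    (carf L β r (u - 1) v : V n) =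
      fun z => carf L β r u v z + eLet (L (u - 1)) z := by
  funext z
  unfold carf
  rw [Finset.sum_eq_sum_Ico_succ_bot (by omega : u - 1 < v)]
  have : u - 1 + 1 = u := by omega
  rw [this]
  ring

/-- Emit the letter at the top of the window. -/
lemma carf_emit (L : ℕ → ℕ) (β r u v : ℕ) (huv : u ≤ v) :
    (carf L β r u (v + 1) : V n) =
      fun z => carf L β r u v z + eLet (L v) z := by
  funext z
  unfold carf
  rw [Finset.sum_Ico_succ_top huv]
  ring

lemma carf_beta_succ (L : ℕ → ℕ) (β r u v : ℕ) :
    (carf L β (r + 1) u v : V n) = fun z => carf L β r u v z + eLet β z := by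
  funext z
  unfold carf
  push_cast
  ring

end Car
section CSteps

variable {n : ℕ}

lemma cast_sub' {S t : ℕ} (ht : t ≤ n) :
    ((S : ZMod n) - (t : ZMod n)) = ((S + n - t : ℕ) : ZMod n) := by
  rw [Nat.cast_sub (by omega : t ≤ S + n)]
  push_cast
  rw [ZMod.natCast_self]
  ring

/-- Absorption step: carrier with base mass `β` (with `r ≥ 1`) meets letter `S`. -/
lemma stepAbs (hn : 3 ≤ n) (L : ℕ → ℕ) (β r u v S : ℕ)
    (hβ1 : 1 ≤ β) (hβn : β ≤ n) (hr : 1 ≤ r) (hS1 : 1 ≤ S) (hSn : S ≤ n) (hSβ : S ≠ β)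
    (hwin : ∀ j, u ≤ j → j < v → S ≤ L j ∧ L j ≤ n)
    (hextra : β < S ∨ ∀ j, u ≤ j → j < v → L j < β) :
    Rbar (carf L β r u v : V n) (eLet S) =
      (eLet β, fun i => carf L β r u v i + eLet S i - eLet β i) ∧
    Rvvbar (eLet S) (carf L β r u v : V n) =
      ((fun i => carf L β r u v i + eLet S i - eLet β i), eLet β) ∧
    Qe (carf L β r u v : V n) (eLet S) 0 = if β < S then 1 else 0 := by
  haveI : NeZero n := ⟨by omega⟩
  set x := carf L β r u v with hxdef
  set d := if β < S then S - β else S + n - β with hd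
  have hβS : β < S ∨ S < β := by omega
  have hd1 : 1 ≤ d := by rw [hd]; split <;> omega
  have hdn : d ≤ n := by rw [hd]; split <;> omega
  have hE : ((S + n - d : ℕ) : ZMod n) = ((β : ℕ) : ZMod n) := by
    rw [hd]; split
    · rw [(by omega : S + n - (S - β) = β + n), cast_add_n]
    · rw [(by omega : S + n - (S + n - β) = β)]
  have hzero : ∀ t : ℕ, 1 ≤ t → t < d → x ((S : ZMod n) - (t : ZMod n)) = 0 := by
    intro t ht1 htd
    rw [cast_sub' (by omega)]
    by_cases hts : t < S
    · rw [(by omega : S + n - t = (S - t) + n), cast_add_n]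
      apply carf_apply_zero hn L β r u v (S - t) (by omega) (by omega)
      · right
        rw [natCast_inj_of (by omega) (by omega) (by omega) hβ1 hβn]
        rcases hβS with h | h
        · have : t < S - β := by rw [hd, if_pos h] at htd; exact htd
          omega
        · omega
      · intro j hj1 hj2 hc
        have hw1 := (hwin j hj1 hj2).1
        rw [natCast_inj_of (by omega) (by omega) (by omega) (by omega) (hwin j hj1 hj2).2] at hc
        omega
    · -- t ≥ S : necessarily β > S
      have hβS' : S < β := by
        rcases hβS with h | h
        · exfalso; rw [hd, if_pos h] at htd; omega
        · exact h
      have hdval : d = S + n - β := by rw [hd, if_neg (by omega)]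
      rw [hdval] at htd
      apply carf_apply_zero hn L β r u v (S + n - t) (by omega) (by omega)
      · right
        rw [natCast_inj_of (by omega) (by omega) (by omega) hβ1 hβn]
        omega
      · intro j hj1 hj2 hc
        rcases hextra with h | h
        · omega
        · have hw1 := (hwin j hj1 hj2).1
          rw [natCast_inj_of (by omega) (by omega) (by omega) (by omega) (hwin j hj1 hj2).2] at hc
          have := h j hj1 hj2
          omega
  have hpos : 1 ≤ x ((S : ZMod n) - (d : ZMod n)) := by
    have : ((S : ZMod n) - (d : ZMod n)) = ((β : ℕ) : ZMod n) := by
      rw [cast_sub' hdn, hE]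
    rw [this]
    calc (1 : ℤ) ≤ (r : ℤ) := by exact_mod_cast hr
    _ ≤ x ((β : ℕ) : ZMod n) := carf_apply_beta L β r u v
  obtain ⟨h1, h2, h3⟩ := Rstep hn x (carf_nonneg L β r u v) S d hS1 hSn hd1 hdn hzero hpos
  rw [eLet_congr hE] at h1 h2
  refine ⟨h1, h2, ?_⟩
  rw [h3]
  apply if_congr ?_ rfl rfl
  rw [hd]
  constructor
  · intro h; split at h <;> omega
  · intro h; split <;> omega

/-- Emission step with wrap-around: carrier window letters all in `[S, Lmax]`,
the top letter `Lmax = L (v-1)` is emitted. -/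
lemma stepEmitUp (hn : 3 ≤ n) (L : ℕ → ℕ) (β r u v S : ℕ)
    (hβ1 : 1 ≤ β) (hβn : β ≤ n) (hu : u < v) (hS1 : 1 ≤ S)
    (hwin : ∀ j, u ≤ j → j < v → S ≤ L j ∧ L j ≤ L (v - 1) ∧ L (v - 1) ≤ n)
    (hrS : r = 0 ∨ S = β) :
    Rbar (carf L β r u v : V n) (eLet S) =
      (eLet (L (v - 1)), fun i => carf L β r u v i + eLet S i - eLet (L (v - 1)) i) ∧
    Rvvbar (eLet S) (carf L β r u v : V n) =
      ((fun i => carf L β r u v i + eLet S i - eLet (L (v - 1)) i), eLet (L (v - 1))) ∧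
    Qe (carf L β r u v : V n) (eLet S) 0 = 0 := by
  haveI : NeZero n := ⟨by omega⟩
  set x := carf L β r u v with hxdef
  have hv1 := hwin (v - 1) (by omega) (by omega)
  set M := L (v - 1) with hM
  have hSM : S ≤ M := hv1.1
  have hMn : M ≤ n := hv1.2.2
  have hSn : S ≤ n := le_trans hSM hMn
  set d := S + n - M with hd
  have hd1 : 1 ≤ d := by omega
  have hdn : d ≤ n := by omega
  have hE : S + n - d = M := by omega
  have hβne : ∀ m : ℕ, 1 ≤ m → m ≤ n → (S = β → m ≠ S) → r = 0 ∨ ¬ ((m : ZMod n) = ((β:ℕ) : ZMod n)) := by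
    intro m hm1 hmn hmS
    rcases hrS with h | h
    · exact Or.inl h
    · right
      rw [natCast_inj_of (by omega) hm1 hmn hβ1 hβn]
      intro hc
      exact (hmS h) (by omega)
  have hzero : ∀ t : ℕ, 1 ≤ t → t < d → x ((S : ZMod n) - (t : ZMod n)) = 0 := by
    intro t ht1 htd
    rw [cast_sub' (by omega)]
    by_cases hts : t < S
    · rw [(by omega : S + n - t = (S - t) + n), cast_add_n]
      apply carf_apply_zero hn L β r u v (S - t) (by omega) (by omega)
      · exact hβne (S - t) (by omega) (by omega) (fun _ => by omega)
      · intro j hj1 hj2 hc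
        have hw1 := (hwin j hj1 hj2).1
        rw [natCast_inj_of (by omega) (by omega) (by omega) (by omega) (le_trans (hwin j hj1 hj2).2.1 hMn)] at hc
        omega
    · apply carf_apply_zero hn L β r u v (S + n - t) (by omega) (by omega)
      · exact hβne (S + n - t) (by omega) (by omega) (fun hSβ => by omega)
      · intro j hj1 hj2 hc
        have h1 := (hwin j hj1 hj2).1
        have h2 := (hwin j hj1 hj2).2.1
        rw [natCast_inj_of (by omega) (by omega) (by omega) (by omega) (le_trans (hwin j hj1 hj2).2.1 hMn)] at hc
        omega
  have hpos : 1 ≤ x ((S : ZMod n) - (d : ZMod n)) := by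
    have : ((S : ZMod n) - (d : ZMod n)) = ((M : ℕ) : ZMod n) := by
      rw [cast_sub' hdn, hE]
    rw [this, hM]
    exact carf_apply_letter L β r u v (v - 1) ⟨by omega, by omega⟩
  obtain ⟨h1, h2, h3⟩ := Rstep hn x (carf_nonneg L β r u v) S d hS1 hSn hd1 hdn hzero hpos
  rw [show (S + n - d) = M from hE] at h1 h2
  refine ⟨h1, h2, ?_⟩
  rw [h3, if_neg (by omega)]

/-- Emission step without wrap-around (`Lmax < S = β`). -/
lemma stepEmitDown (hn : 3 ≤ n) (L : ℕ → ℕ) (β r u v : ℕ)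
    (hβn : β ≤ n) (hu : u < v)
    (hwin : ∀ j, u ≤ j → j < v → 1 ≤ L j ∧ L j ≤ L (v - 1) ∧ L (v - 1) < β) :
    Rbar (carf L β r u v : V n) (eLet β) =
      (eLet (L (v - 1)), fun i => carf L β r u v i + eLet β i - eLet (L (v - 1)) i) ∧
    Rvvbar (eLet β) (carf L β r u v : V n) =
      ((fun i => carf L β r u v i + eLet β i - eLet (L (v - 1)) i), eLet (L (v - 1))) ∧
    Qe (carf L β r u v : V n) (eLet β) 0 = 1 := by
  haveI : NeZero n := ⟨by omega⟩
  set x := carf L β r u v with hxdef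
  have hv1 := hwin (v - 1) (by omega) (by omega)
  set M := L (v - 1) with hM
  have hM1 : 1 ≤ M := hv1.1
  have hMβ : M < β := hv1.2.2
  set d := β - M with hd
  have hd1 : 1 ≤ d := by omega
  have hdn : d ≤ n := by omega
  have hE : ((β + n - d : ℕ) : ZMod n) = ((M : ℕ) : ZMod n) := by
    rw [(by omega : β + n - d = M + n), cast_add_n]
  have hzero : ∀ t : ℕ, 1 ≤ t → t < d → x ((β : ZMod n) - (t : ZMod n)) = 0 := by
    intro t ht1 htd
    rw [cast_sub' (by omega), (by omega : β + n - t = (β - t) + n), cast_add_n]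
    apply carf_apply_zero hn L β r u v (β - t) (by omega) (by omega)
    · right
      rw [natCast_inj_of (by omega) (by omega) (by omega) (by omega) hβn]
      omega
    · intro j hj1 hj2 hc
      have hw2 := (hwin j hj1 hj2).2.1
      rw [natCast_inj_of (by omega) (by omega) (by omega) (hwin j hj1 hj2).1
        (by omega)] at hc
      omega
  have hpos : 1 ≤ x ((β : ZMod n) - (d : ZMod n)) := by
    have : ((β : ZMod n) - (d : ZMod n)) = ((M : ℕ) : ZMod n) := by
      rw [cast_sub' hdn, hE]
    rw [this, hM]
    exact carf_apply_letter L β r u v (v - 1) ⟨by omega, by omega⟩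
  obtain ⟨h1, h2, h3⟩ := Rstep hn x (carf_nonneg L β r u v) β d (by omega) hβn hd1 hdn hzero hpos
  rw [eLet_congr hE] at h1 h2
  refine ⟨h1, h2, ?_⟩
  rw [h3, if_pos (by omega)]

/-- Identity step: a carrier with only `β`-mass meets the letter `β`. -/
lemma stepId (hn : 3 ≤ n) (L : ℕ → ℕ) (β r u : ℕ)
    (hβ1 : 1 ≤ β) (hβn : β ≤ n) (hr : 1 ≤ r) :
    Rbar (carf L β r u u : V n) (eLet β) = (eLet β, carf L β r u u) ∧
    Rvvbar (eLet β) (carf L β r u u : V n) = (carf L β r u u, eLet β) ∧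
    Qe (carf L β r u u : V n) (eLet β) 0 = 0 := by
  haveI : NeZero n := ⟨by omega⟩
  set x := carf L β r u u with hxdef
  have hzero : ∀ t : ℕ, 1 ≤ t → t < n → x ((β : ZMod n) - (t : ZMod n)) = 0 := by
    intro t ht1 htd
    rw [cast_sub' (by omega)]
    by_cases hts : t < β
    · rw [(by omega : β + n - t = (β - t) + n), cast_add_n]
      apply carf_apply_zero hn L β r u u (β - t) (by omega) (by omega)
      · right
        rw [natCast_inj_of (by omega) (by omega) (by omega) hβ1 hβn]
        omega
      · intro j hj1 hj2; omega
    · apply carf_apply_zero hn L β r u u (β + n - t) (by omega) (by omega)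
      · right
        rw [natCast_inj_of (by omega) (by omega) (by omega) hβ1 hβn]
        omega
      · intro j hj1 hj2; omega
  have hpos : 1 ≤ x ((β : ZMod n) - (n : ZMod n)) := by
    have : ((β : ZMod n) - (n : ZMod n)) = ((β : ℕ) : ZMod n) := by
      rw [ZMod.natCast_self]; ring
    rw [this]
    calc (1 : ℤ) ≤ (r : ℤ) := by exact_mod_cast hr
    _ ≤ x ((β : ℕ) : ZMod n) := carf_apply_beta L β r u u
  obtain ⟨h1, h2, h3⟩ := Rstep hn x (carf_nonneg L β r u u) β n hβ1 hβn
    (by omega) le_rfl hzero hpos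
  have hE : ((β + n - n : ℕ) : ZMod n) = ((β : ℕ) : ZMod n) := by
    rw [(by omega : β + n - n = β)]
  rw [eLet_congr hE] at h1 h2
  have hid : (fun i => x i + eLet β i - eLet β i) = x := by funext i; ring
  rw [hid] at h1 h2
  exact ⟨h1, h2, by rw [h3, if_neg (by omega)]⟩

end CSteps
section ScenR

variable {n : ℕ}

/-- The right-soliton state (canonical form). -/
def pRst (t0 : ℕ) (L : ℕ → ℕ) (a l : ℕ) : ℕ → V n × V n := fun s =>
  if a ≤ s ∧ s < a + l then (eLet (L (s - a + 1)), eLet t0) else (eLet 1, eLet t0)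

/-- The predicted downward carrier below site `σ` (i.e. entering site `σ - 1`). -/
def VRc (L : ℕ → ℕ) (k l a : ℕ) (σ : ℕ) : V n :=
  if a ≤ σ then
    carf L 1 (k - min (a + l - σ) k) (σ - a + 1) (σ - a + 1 + min (a + l - σ) k)
  else
    carf L 1 (k - min k l + min (a - σ) (min k l)) 1 (min k l - min (a - σ) (min k l) + 1)

lemma carf_congr (L : ℕ → ℕ) (β : ℕ) {r r' u u' v v' : ℕ}
    (hr : r = r') (hu : u = u') (hv : v = v') :
    (carf L β r u v : V n) = carf L β r' u' v' := by
  subst hr; subst hu; subst hv; rfl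

lemma VRc_mid (L : ℕ → ℕ) (k l a σ : ℕ) (h1 : a ≤ σ) :
    (VRc L k l a σ : V n) =
      carf L 1 (k - min (a + l - σ) k) (σ - a + 1) (σ - a + 1 + min (a + l - σ) k) := by
  unfold VRc; rw [if_pos h1]

lemma VRc_dep (L : ℕ → ℕ) (k l a σ : ℕ) (h1 : σ ≤ a) :
    (VRc L k l a σ : V n) =
      carf L 1 (k - min k l + min (a - σ) (min k l)) 1
        (min k l - min (a - σ) (min k l) + 1) := by
  by_cases h2 : a ≤ σ
  · have : σ = a := by omega
    subst this
    unfold VRc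
    rw [if_pos le_rfl]
    exact carf_congr L 1 (by omega) (by omega) (by omega)
  · unfold VRc; rw [if_neg h2]

/-- `VRc` always has the shape `carf L 1 r u v` with window indices in `[1, l]`. -/
lemma VRc_shape (L : ℕ → ℕ) (k l a σ : ℕ) :
    ∃ r u v, (VRc L k l a σ : V n) = carf L 1 r u v ∧
      (∀ j, u ≤ j → j < v → 1 ≤ j ∧ j ≤ l) := by
  unfold VRc
  split
  · exact ⟨_, _, _, rfl, fun j hj1 hj2 => by
      constructor <;> omega⟩
  · exact ⟨_, _, _, rfl, fun j hj1 hj2 => by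
      constructor <;> omega⟩

lemma disj_carf (hn : 3 ≤ n) (L : ℕ → ℕ) (t0 l r u v : ℕ)
    (ht02 : 2 ≤ t0) (ht0n : t0 ≤ n)
    (hLn : ∀ j, 1 ≤ j → j ≤ l → L j ≤ n) (hL1 : ∀ j, 1 ≤ j → j ≤ l → 1 ≤ L j)
    (hLt0 : ∀ j, 1 ≤ j → j ≤ l → L j ≠ t0)
    (hwin : ∀ j, u ≤ j → j < v → 1 ≤ j ∧ j ≤ l) :
    ∀ i, min ((carf L 1 r u v : V n) i) (eLet t0 i) = 0 := by
  haveI : NeZero n := ⟨by omega⟩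
  intro i
  by_cases h : i = ((t0 : ℕ) : ZMod n)
  · rw [h]
    have hz : (carf L 1 r u v : V n) ((t0 : ℕ) : ZMod n) = 0 := by
      apply carf_apply_zero hn L 1 r u v t0 (by omega) ht0n
      · right
        rw [natCast_inj_of (by omega) (by omega) ht0n (by omega) (by omega)]
        omega
      · intro j hj1 hj2 hc
        have hb := hwin j hj1 hj2
        rw [natCast_inj_of (by omega) (by omega) ht0n (hL1 j hb.1 hb.2) (hLn j hb.1 hb.2)] at hc
        exact (hLt0 j hb.1 hb.2) hc.symm
    rw [hz]
    exact min_eq_left (eLet_nonneg _ _)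
  · rw [eLet_apply_ne h]
    exact min_eq_right (carf_nonneg _ _ _ _ _ _)

lemma assembleR (x v' : V n) (S E t0 : ℕ)
    (hR : Rbar x (eLet S) = (eLet E, v'))
    (hdisj : ∀ i, min (v' i) (eLet t0 i) = 0) :
    stepRfull x (eLet S, eLet t0) = ((eLet E, eLet t0), v') ∧
    Pe (Rbar x (eLet S)).2 (eLet t0) 0 = 0 := by
  obtain ⟨hv, hPe⟩ := Rv_id v' (eLet t0) hdisj
  constructor
  · unfold stepRfull
    dsimp only
    rw [hR]
    dsimp only
    rw [hv]
  · rw [hR]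
    dsimp only
    exact hPe

/-- The workhorse for the right soliton: one full downward step at site `s`. -/
lemma siteR (hn : 3 ≤ n) (k l a t0 : ℕ) (L : ℕ → ℕ) (hk : 1 ≤ k) (hl : 1 ≤ l)
    (ht02 : 2 ≤ t0) (ht0n : t0 ≤ n)
    (hL2 : ∀ j, 1 ≤ j → j ≤ l → 2 ≤ L j) (hLn : ∀ j, 1 ≤ j → j ≤ l → L j ≤ n)
    (hLt0 : ∀ j, 1 ≤ j → j ≤ l → L j ≠ t0)
    (hmono : ∀ j j', 1 ≤ j → j ≤ j' → j' ≤ l → L j ≤ L j') (s : ℕ) :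
    (∃ σ, 1 ≤ σ ∧ σ ≤ n ∧ σ ≠ t0 ∧
      stepRfull (VRc L k l a (s+1) : V n) (pRst t0 L a l s) =
        ((eLet σ, eLet t0), VRc L k l a s)) ∧
    Qe (VRc L k l a (s+1) : V n) (pRst t0 L a l s).1 0 =
      (if a + l - min k l ≤ s ∧ s < a + l then 1 else 0) ∧
    Pe (Rbar (VRc L k l a (s+1) : V n) (pRst t0 L a l s).1).2 (pRst t0 L a l s).2 0 = 0 := by
  haveI : NeZero n := ⟨by omega⟩
  -- disjointness of the new carrier with `eLet t0`, valid in all cases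
  have hdisj : ∀ i, min ((VRc L k l a s : V n) i) (eLet t0 i) = 0 := by
    obtain ⟨r, u, v, hform, hwin⟩ := VRc_shape L k l a s
    rw [hform]
    exact disj_carf hn L t0 l r u v ht02 ht0n hLn (fun j h1 h2 => by have := hL2 j h1 h2; omega)
      hLt0 hwin
  by_cases hs1 : a + l ≤ s
  · -- vacuum site above the soliton
    have hps : pRst t0 L a l s = ((eLet 1 : V n), eLet t0) := by
      unfold pRst; rw [if_neg (by omega)]
    have hx : (VRc L k l a (s+1) : V n) = carf L 1 k (s + 1 - a + 1) (s + 1 - a + 1) :=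
      (VRc_mid L k l a (s+1) (by omega)).trans (carf_congr L 1 (by omega) rfl (by omega))
    have hVs : (VRc L k l a s : V n) = carf L 1 k (s + 1 - a + 1) (s + 1 - a + 1) :=
      ((VRc_mid L k l a s (by omega)).trans (carf_congr L 1 (by omega) rfl (by omega))).trans
        (carf_empty' L L 1 k (s - a + 1) (s + 1 - a + 1))
    obtain ⟨hR, _, hQ⟩ := stepId hn L 1 k (s + 1 - a + 1) (by omega) (by omega) hk
    have hR2 : Rbar (carf L 1 k (s + 1 - a + 1) (s + 1 - a + 1) : V n) (eLet 1) =
        (eLet 1, VRc L k l a s) := hR.trans (by rw [hVs])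
    rw [hps, hx]
    obtain ⟨hstep, hPe⟩ := assembleR _ _ 1 1 t0 hR2 hdisj
    refine ⟨⟨1, by omega, by omega, by omega, hstep⟩, ?_, hPe⟩
    try dsimp only
    rw [hQ, if_neg (by omega)]
  · by_cases hs2 : a ≤ s
    · -- soliton site
      have hps : pRst t0 L a l s = ((eLet (L (s - a + 1)) : V n), eLet t0) := by
        unfold pRst; rw [if_pos ⟨hs2, by omega⟩]
      have hidx1 : 1 ≤ s - a + 1 := by omega
      have hidx2 : s - a + 1 ≤ l := by omega
      have hS2 := hL2 _ hidx1 hidx2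
      have hSn := hLn _ hidx1 hidx2
      by_cases hnd : a + l - s ≤ k
      · -- non-depleted absorption : energy 1
        have hx : (VRc L k l a (s+1) : V n) =
            carf L 1 ((k - (a + l - s)) + 1) ((s - a + 1) + 1) (l + 1) :=
          (VRc_mid L k l a (s+1) (by omega)).trans (carf_congr L 1 (by omega) (by omega) (by omega))
        have hVs : (VRc L k l a s : V n) = carf L 1 (k - (a + l - s)) (s - a + 1) (l + 1) :=
          (VRc_mid L k l a s (by omega)).trans (carf_congr L 1 (by omega) (by omega) (by omega))
        obtain ⟨hR, _, hQ⟩ := stepAbs hn L 1 ((k - (a + l - s)) + 1) ((s - a + 1) + 1) (l + 1)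
          (L (s - a + 1)) (by omega) (by omega) (by omega) (by omega) hSn (by omega)
          (fun j hj1 hj2 => ⟨hmono (s - a + 1) j hidx1 (by omega) (by omega),
            hLn j (by omega) (by omega)⟩)
          (Or.inl (by omega))
        have hnew : (fun i => carf L 1 ((k - (a + l - s)) + 1) ((s - a + 1) + 1) (l + 1) i +
            eLet (L (s - a + 1)) i - eLet 1 i) = (VRc L k l a s : V n) := by
          rw [hVs]
          funext z
          have h1 := congrFun (carf_absorb L 1 (k - (a + l - s)) ((s - a + 1) + 1) (l + 1)
            (by omega) (by omega)) z
          have h2 := congrFun (carf_beta_succ L 1 (k - (a + l - s)) ((s - a + 1) + 1) (l + 1)) z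
          simp only [Nat.add_sub_cancel] at h1
          try dsimp only at h1 h2 ⊢
          linarith
        rw [hnew] at hR
        rw [hps, hx]
        obtain ⟨hstep, hPe⟩ := assembleR _ _ (L (s - a + 1)) 1 t0 hR hdisj
        refine ⟨⟨1, by omega, by omega, by omega, hstep⟩, ?_, hPe⟩
        try dsimp only
        rw [hQ, if_pos (by omega), if_pos (by omega)]
      · -- depleted absorption : energy 0
        have hx : (VRc L k l a (s+1) : V n) =
            carf L 1 0 ((s - a + 1) + 1) ((s - a + 1) + 1 + k) :=
          (VRc_mid L k l a (s+1) (by omega)).trans (carf_congr L 1 (by omega) (by omega) (by omega))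
        have hVs : (VRc L k l a s : V n) = carf L 1 0 (s - a + 1) ((s - a + 1) + k) :=
          (VRc_mid L k l a s (by omega)).trans (carf_congr L 1 (by omega) (by omega) (by omega))
        have htop : (s - a + 1) + 1 + k - 1 = s - a + 1 + k := by omega
        have htopl : s - a + 1 + k ≤ l := by omega
        obtain ⟨hR, _, hQ⟩ := stepEmitUp hn L 1 0 ((s - a + 1) + 1) ((s - a + 1) + 1 + k)
          (L (s - a + 1)) (by omega) (by omega) (by omega) (by omega)
          (fun j hj1 hj2 => by
            rw [htop]
            exact ⟨hmono (s - a + 1) j hidx1 (by omega) (by omega),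
              hmono j (s - a + 1 + k) (by omega) (by omega) htopl,
              hLn (s - a + 1 + k) (by omega) htopl⟩)
          (Or.inl rfl)
        rw [htop] at hR
        have hnew : (fun i => carf L 1 0 ((s - a + 1) + 1) ((s - a + 1) + 1 + k) i +
            eLet (L (s - a + 1)) i - eLet (L (s - a + 1 + k)) i) = (VRc L k l a s : V n) := by
          rw [hVs]
          funext z
          have h1 := congrFun (carf_absorb L 1 0 ((s - a + 1) + 1) ((s - a + 1) + 1 + k)
            (by omega) (by omega)) z
          simp only [Nat.add_sub_cancel] at h1
          have h2 := congrFun (carf_emit L 1 0 (s - a + 1) (s - a + 1 + k) (by omega)) z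
          try dsimp only at h1 h2 ⊢
          have e2 : s - a + 1 + k + 1 = (s - a + 1) + 1 + k := by omega
          rw [e2] at h2
          linarith
        rw [hnew] at hR
        rw [hps, hx]
        obtain ⟨hstep, hPe⟩ := assembleR _ _ (L (s - a + 1)) (L (s - a + 1 + k)) t0 hR hdisj
        refine ⟨⟨L (s - a + 1 + k), ?_, hLn _ (by omega) htopl, hLt0 _ (by omega) htopl, hstep⟩,
          ?_, hPe⟩
        · have := hL2 (s - a + 1 + k) (by omega) htopl; omega
        · try dsimp only
          rw [hQ, if_neg (by omega)]
    · -- below the soliton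
      have hps : pRst t0 L a l s = ((eLet 1 : V n), eLet t0) := by
        unfold pRst; rw [if_neg (by omega)]
      by_cases hq : a - s - 1 < min k l
      · -- deposit site : emit the top letter
        have hx : (VRc L k l a (s+1) : V n) =
            carf L 1 (k - min k l + (a - s - 1)) 1 ((min k l - (a - s - 1) - 1) + 1 + 1) :=
          (VRc_dep L k l a (s+1) (by omega)).trans (carf_congr L 1 (by omega) rfl (by omega))
        have hVs : (VRc L k l a s : V n) =
            carf L 1 ((k - min k l + (a - s - 1)) + 1) 1 ((min k l - (a - s - 1) - 1) + 1) :=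
          (VRc_dep L k l a s (by omega)).trans (carf_congr L 1 (by omega) rfl (by omega))
        set e := min k l - (a - s - 1) - 1 with he
        have hel : e + 1 ≤ l := by omega
        have htop : e + 1 + 1 - 1 = e + 1 := by omega
        obtain ⟨hR, _, hQ⟩ := stepEmitUp hn L 1 (k - min k l + (a - s - 1)) 1 (e + 1 + 1) 1
          (by omega) (by omega) (by omega) (by omega)
          (fun j hj1 hj2 => by
            rw [htop]
            exact ⟨by have := hL2 j (by omega) (by omega); omega,
              hmono j (e + 1) (by omega) (by omega) hel, hLn (e + 1) (by omega) hel⟩)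
          (Or.inr rfl)
        rw [htop] at hR
        have hnew : (fun i => carf L 1 (k - min k l + (a - s - 1)) 1 (e + 1 + 1) i +
            eLet 1 i - eLet (L (e + 1)) i) = (VRc L k l a s : V n) := by
          rw [hVs]
          funext z
          have h1 := congrFun (carf_emit L 1 (k - min k l + (a - s - 1)) 1 (e + 1) (by omega)) z
          have h2 := congrFun (carf_beta_succ L 1 (k - min k l + (a - s - 1)) 1 (e + 1)) z
          try dsimp only at h1 h2 ⊢
          linarith
        rw [hnew] at hR
        rw [hps, hx]
        obtain ⟨hstep, hPe⟩ := assembleR _ _ 1 (L (e + 1)) t0 hR hdisj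
        refine ⟨⟨L (e + 1), ?_, hLn _ (by omega) hel, hLt0 _ (by omega) hel, hstep⟩, ?_, hPe⟩
        · have := hL2 (e + 1) (by omega) hel; omega
        · try dsimp only
          rw [hQ, if_neg (by omega)]
      · -- vacuum site far below : identity
        have hx : (VRc L k l a (s+1) : V n) = carf L 1 k 1 1 :=
          (VRc_dep L k l a (s+1) (by omega)).trans (carf_congr L 1 (by omega) rfl (by omega))
        have hVs : (VRc L k l a s : V n) = carf L 1 k 1 1 :=
          (VRc_dep L k l a s (by omega)).trans (carf_congr L 1 (by omega) rfl (by omega))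
        obtain ⟨hR, _, hQ⟩ := stepId hn L 1 k 1 (by omega) (by omega) hk
        have hR2 : Rbar (carf L 1 k 1 1 : V n) (eLet 1) = (eLet 1, VRc L k l a s) :=
          hR.trans (by rw [hVs])
        rw [hps, hx]
        obtain ⟨hstep, hPe⟩ := assembleR _ _ 1 1 t0 hR2 hdisj
        refine ⟨⟨1, by omega, by omega, by omega, hstep⟩, ?_, hPe⟩
        try dsimp only
        rw [hQ, if_neg (by omega)]

end ScenR
section ScenR2

variable {n : ℕ}

lemma VRc_vac (L : ℕ → ℕ) (k l a σ : ℕ) (h : a + l ≤ σ) :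
    (VRc L k l a σ : V n) = uVec k :=
  ((VRc_mid L k l a σ (by omega)).trans (carf_congr L 1 (by omega) rfl (by omega))).trans
    (uVec_eq_carf L k (σ - a + 1)).symm

lemma VRc_zero (L : ℕ → ℕ) (k l a : ℕ) (ha : min k l + 1 ≤ a) :
    (VRc L k l a 0 : V n) = uVec k :=
  ((VRc_dep L k l a 0 (by omega)).trans (carf_congr L 1 (by omega) rfl (by omega))).trans
    (uVec_eq_carf L k 1).symm

/-- Section-wide hypotheses bundled as one structure to avoid repetition. -/
structure HypR (n k l a t0 : ℕ) (L : ℕ → ℕ) : Prop where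
  hn : 3 ≤ n
  hk : 1 ≤ k
  hl : 1 ≤ l
  ht02 : 2 ≤ t0
  ht0n : t0 ≤ n
  hL2 : ∀ j, 1 ≤ j → j ≤ l → 2 ≤ L j
  hLn : ∀ j, 1 ≤ j → j ≤ l → L j ≤ n
  hLt0 : ∀ j, 1 ≤ j → j ≤ l → L j ≠ t0
  hmono : ∀ j j', 1 ≤ j → j ≤ j' → j' ≤ l → L j ≤ L j'
  ha : min k l + 1 ≤ a

lemma vCarR (k l a t0 : ℕ) (L : ℕ → ℕ) (H : HypR n k l a t0 L) (N : ℕ) (hN : a + l ≤ N) :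
    ∀ m, m ≤ N → vCar (pRst t0 L a l) (uVec k) N m = (VRc L k l a (N - m) : V n) := by
  intro m
  induction m with
  | zero =>
    intro _
    rw [(by omega : N - 0 = N), VRc_vac L k l a N hN]
    rfl
  | succ m ih =>
    intro hm
    have hstep := (siteR H.hn k l a t0 L H.hk H.hl H.ht02 H.ht0n H.hL2 H.hLn H.hLt0 H.hmono
      (N - 1 - m)).1
    obtain ⟨σ, _, _, _, hstep⟩ := hstep
    show (stepRfull (vCar (pRst t0 L a l) (uVec k) N m) (pRst t0 L a l (N - 1 - m))).2 = _
    rw [ih (by omega), (by omega : N - m = (N - 1 - m) + 1), hstep]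
    rw [(by omega : N - (m + 1) = N - 1 - m)]

lemma vCarR_at (k l a t0 : ℕ) (L : ℕ → ℕ) (H : HypR n k l a t0 L) (N : ℕ) (hN : a + l ≤ N)
    (s : ℕ) :
    vCar (pRst t0 L a l) (uVec k) N (N - 1 - s) = (VRc L k l a (s + 1) : V n) := by
  by_cases hs : s + 1 ≤ N
  · rw [vCarR k l a t0 L H N hN (N - 1 - s) (by omega), (by omega : N - (N - 1 - s) = s + 1)]
  · rw [(by omega : N - 1 - s = 0)]
    rw [vCarR k l a t0 L H N hN 0 (by omega), (by omega : N - 0 = N)]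
    rw [VRc_vac L k l a N hN, VRc_vac L k l a (s+1) (by omega)]

lemma pdagR (k l a t0 : ℕ) (L : ℕ → ℕ) (H : HypR n k l a t0 L) (N : ℕ) (hN : a + l ≤ N)
    (s : ℕ) :
    ∃ σ, 1 ≤ σ ∧ σ ≤ n ∧ σ ≠ t0 ∧
      pdag (pRst t0 L a l) (uVec k) N s = ((eLet σ : V n), eLet t0) := by
  obtain ⟨σ, h1, h2, h3, hstep⟩ := (siteR H.hn k l a t0 L H.hk H.hl H.ht02 H.ht0n H.hL2 H.hLn
    H.hLt0 H.hmono s).1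
  refine ⟨σ, h1, h2, h3, ?_⟩
  show (stepRfull (vCar (pRst t0 L a l) (uVec k) N (N - 1 - s)) (pRst t0 L a l s)).1 = _
  rw [vCarR_at k l a t0 L H N hN s, hstep]

/-- One step of the upward pass against the constant carrier `k · e_{t0}`. -/
lemma stepL_vac (hn : 3 ≤ n) (L : ℕ → ℕ) (k t0 : ℕ) (hk : 1 ≤ k) (ht02 : 2 ≤ t0)
    (ht0n : t0 ≤ n) (σ : ℕ) (hσ1 : 1 ≤ σ) (hσn : σ ≤ n) (hσt0 : σ ≠ t0) :
    stepLfull (carf L t0 k 1 1) ((eLet σ : V n), eLet t0) =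
      ((eLet σ, eLet t0), carf L t0 k 1 1) ∧
    Qe (carf L t0 k 1 1 : V n) (eLet t0) 0 = 0 ∧
    Pe (Rvvbar (eLet t0) (carf L t0 k 1 1 : V n)).1 (eLet σ) 0 = 0 := by
  haveI : NeZero n := ⟨by omega⟩
  obtain ⟨_, hvv, hQ⟩ := stepId hn L t0 k 1 (by omega) ht0n hk
  have hw1 : (carf L t0 k 1 1 : V n) ((1 : ℕ) : ZMod n) = 0 := by
    apply carf_apply_zero hn L t0 k 1 1 1 (by omega) (by omega)
    · right
      rw [natCast_inj_of (by omega) (by omega) (by omega) (by omega) ht0n]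
      omega
    · intro j hj1 hj2; omega
  have hwσ : (carf L t0 k 1 1 : V n) ((σ : ℕ) : ZMod n) = 0 := by
    apply carf_apply_zero hn L t0 k 1 1 σ hσ1 hσn
    · right
      rw [natCast_inj_of (by omega) hσ1 hσn (by omega) ht0n]
      omega
    · intro j hj1 hj2; omega
  have hdisj : ∀ i, min ((eLet σ : V n) i) ((carf L t0 k 1 1 : V n) i) = 0 := by
    intro i
    by_cases h : i = ((σ : ℕ) : ZMod n)
    · rw [h, hwσ]
      exact min_eq_right (eLet_nonneg _ _)
    · rw [eLet_apply_ne h]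
      exact min_eq_left (carf_nonneg _ _ _ _ _ _)
  obtain ⟨hrv, _⟩ := Rv_id (eLet σ) (carf L t0 k 1 1) hdisj
  refine ⟨?_, hQ, ?_⟩
  · unfold stepLfull
    dsimp only
    rw [hvv]
    dsimp only
    rw [hrv]
  · rw [hvv]
    dsimp only
    unfold Pe
    have h01 : ((0 : ZMod n) + 1) = ((1 : ℕ) : ZMod n) := by push_cast; ring
    rw [h01, hw1]
    exact min_eq_left (eLet_nonneg _ _)

lemma wCarR (k l a t0 : ℕ) (L : ℕ → ℕ) (H : HypR n k l a t0 L) (N : ℕ) (hN : a + l ≤ N) :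
    ∀ m, wCar (pdag (pRst t0 L a l) (uVec k) N) (carf L t0 k 1 1) m =
      (carf L t0 k 1 1 : V n) := by
  intro m
  induction m with
  | zero => rfl
  | succ m ih =>
    obtain ⟨σ, h1, h2, h3, hq⟩ := pdagR k l a t0 L H N hN m
    show (stepLfull (wCar (pdag (pRst t0 L a l) (uVec k) N) (carf L t0 k 1 1) m)
      (pdag (pRst t0 L a l) (uVec k) N m)).2 = _
    rw [ih, hq, (stepL_vac H.hn L k t0 H.hk H.ht02 H.ht0n σ h1 h2 h3).1]

lemma EtermR (κ : V n → V n) (k l a t0 : ℕ) (L : ℕ → ℕ) (H : HypR n k l a t0 L) (N : ℕ)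
    (hN : a + l ≤ N) (hκu : κ (uVec k) = carf L t0 k 1 1) (s : ℕ) :
    Eterm κ k (pRst t0 L a l) N s =
      if a + l - min k l ≤ s ∧ s < a + l then 1 else 0 := by
  obtain ⟨hex, hQ1, hP1⟩ := siteR H.hn k l a t0 L H.hk H.hl H.ht02 H.ht0n H.hL2 H.hLn H.hLt0
    H.hmono s
  obtain ⟨σ, h1, h2, h3, hq⟩ := pdagR k l a t0 L H N hN s
  have hvN : vCar (pRst t0 L a l) (uVec k) N N = (uVec k : V n) := by
    rw [vCarR k l a t0 L H N hN N le_rfl, (by omega : N - N = 0), VRc_zero L k l a H.ha]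
  have hv := vCarR_at k l a t0 L H N hN s
  have hw := wCarR k l a t0 L H N hN s
  obtain ⟨_, hQw, hPw⟩ := stepL_vac H.hn L k t0 H.hk H.ht02 H.ht0n σ h1 h2 h3
  unfold Eterm
  dsimp only
  rw [hv, hq, hvN, hκu, hw, hQ1, hP1]
  dsimp only
  rw [hQw, hPw]
  ring

end ScenR2
section ScenL

variable {n : ℕ}

/-- The left-soliton state (canonical form). -/
def pLst (t0 : ℕ) (L : ℕ → ℕ) (a l : ℕ) : ℕ → V n × V n := fun s =>
  if a ≤ s ∧ s < a + l then (eLet 1, eLet (L (l - (s - a)))) else (eLet 1, eLet t0)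

/-- The predicted upward carrier entering site `s`. -/
def WLc (t0 : ℕ) (L : ℕ → ℕ) (k l a : ℕ) (s : ℕ) : V n :=
  if s ≤ a then carf L t0 k 1 1
  else if s ≤ a + l then
    carf L t0 (k - min (s - a) k) (l - (s - a) + 1) (l - (s - a) + 1 + min (s - a) k)
  else
    carf L t0 (k - min k l + min (s - a - l) (min k l)) 1
      (min k l - min (s - a - l) (min k l) + 1)

lemma WLc_low (t0 : ℕ) (L : ℕ → ℕ) (k l a s : ℕ) (h : s ≤ a) :
    (WLc t0 L k l a s : V n) = carf L t0 k 1 1 := by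
  unfold WLc; rw [if_pos h]

lemma WLc_mid (t0 : ℕ) (L : ℕ → ℕ) (k l a s : ℕ) (h1 : a ≤ s) (h2 : s ≤ a + l) :
    (WLc t0 L k l a s : V n) =
      carf L t0 (k - min (s - a) k) (l - (s - a) + 1) (l - (s - a) + 1 + min (s - a) k) := by
  by_cases h : s ≤ a
  · have hsa : s = a := by omega
    rw [WLc_low t0 L k l a s h,
      carf_empty' L L t0 k 1 (l - (s - a) + 1)]
    exact carf_congr L t0 (by omega) rfl (by omega)
  · unfold WLc; rw [if_neg h, if_pos h2]

lemma WLc_hi (t0 : ℕ) (L : ℕ → ℕ) (k l a s : ℕ) (h : a + l ≤ s) :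
    (WLc t0 L k l a s : V n) =
      carf L t0 (k - min k l + min (s - a - l) (min k l)) 1
        (min k l - min (s - a - l) (min k l) + 1) := by
  by_cases h2 : s ≤ a + l
  · have hsa : s = a + l := by omega
    rw [WLc_mid t0 L k l a s (by omega) h2]
    exact carf_congr L t0 (by omega) (by omega) (by omega)
  · unfold WLc; rw [if_neg (by omega), if_neg h2]

lemma WLc_shape (t0 : ℕ) (L : ℕ → ℕ) (k l a s : ℕ) (hl : 1 ≤ l) :
    ∃ r u v, (WLc t0 L k l a s : V n) = carf L t0 r u v ∧
      (∀ j, u ≤ j → j < v → 1 ≤ j ∧ j ≤ l) := by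
  unfold WLc
  split
  · exact ⟨_, _, _, rfl, fun j h1 h2 => by omega⟩
  · split
    · exact ⟨_, _, _, rfl, fun j h1 h2 => by constructor <;> omega⟩
    · exact ⟨_, _, _, rfl, fun j h1 h2 => by constructor <;> omega⟩

lemma disjL (hn : 3 ≤ n) (L : ℕ → ℕ) (t0 l r u v : ℕ)
    (ht02 : 2 ≤ t0) (ht0n : t0 ≤ n)
    (hL2 : ∀ j, 1 ≤ j → j ≤ l → 2 ≤ L j) (hLn : ∀ j, 1 ≤ j → j ≤ l → L j ≤ n)
    (hwin : ∀ j, u ≤ j → j < v → 1 ≤ j ∧ j ≤ l) :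
    ∀ i, min ((eLet 1 : V n) i) ((carf L t0 r u v : V n) i) = 0 := by
  haveI : NeZero n := ⟨by omega⟩
  intro i
  by_cases h : i = ((1 : ℕ) : ZMod n)
  · have hz : (carf L t0 r u v : V n) ((1 : ℕ) : ZMod n) = 0 := by
      apply carf_apply_zero hn L t0 r u v 1 (by omega) (by omega)
      · right
        rw [natCast_inj_of (by omega) (by omega) (by omega) (by omega) ht0n]
        omega
      · intro j hj1 hj2 hc
        have hb := hwin j hj1 hj2
        have h2 := hL2 j hb.1 hb.2
        rw [natCast_inj_of (by omega) (by omega) (by omega) (by omega) (hLn j hb.1 hb.2)] at hc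
        omega
    rw [h, hz]
    exact min_eq_right (eLet_nonneg _ _)
  · rw [eLet_apply_ne h]
    exact min_eq_left (carf_nonneg _ _ _ _ _ _)

lemma assembleL (w w' : V n) (T t' : ℕ)
    (hvv : Rvvbar (eLet T) w = (w', eLet t'))
    (hdisj : ∀ i, min ((eLet 1 : V n) i) (w' i) = 0) :
    (stepLfull w ((eLet 1 : V n), eLet T)).2 = w' ∧
    Pe (Rvvbar (eLet T) w).1 (eLet 1) 0 = 0 := by
  obtain ⟨hrv, _⟩ := Rv_id (eLet 1) w' hdisj
  constructor
  · unfold stepLfull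
    dsimp only
    rw [hvv]
    dsimp only
    rw [hrv]
  · rw [hvv]
    dsimp only
    unfold Pe
    rw [min_comm]
    exact hdisj ((0 : ZMod n) + 1)

/-- The workhorse for the left soliton: one full upward step at site `s`. -/
lemma siteL_up (hn : 3 ≤ n) (k l a t0 lo : ℕ) (L : ℕ → ℕ) (hk : 1 ≤ k) (hl : 1 ≤ l)
    (ht02 : 2 ≤ t0) (ht0n : t0 ≤ n)
    (hL2 : ∀ j, 1 ≤ j → j ≤ l → 2 ≤ L j) (hLn : ∀ j, 1 ≤ j → j ≤ l → L j ≤ n)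
    (hmono : ∀ j j', 1 ≤ j → j ≤ j' → j' ≤ l → L j ≤ L j')
    (hlo : (lo = a + l ∧ ∀ j, 1 ≤ j → j ≤ l → L j < t0) ∨
      (lo = a ∧ ∀ j, 1 ≤ j → j ≤ l → t0 < L j)) (s : ℕ) :
    (stepLfull (WLc t0 L k l a s) (pLst t0 L a l s)).2 = (WLc t0 L k l a (s + 1) : V n) ∧
    Qe (WLc t0 L k l a s : V n) (pLst t0 L a l s).2 0 =
      (if lo ≤ s ∧ s < lo + min k l then 1 else 0) ∧
    Pe (Rvvbar (pLst t0 L a l s).2 (WLc t0 L k l a s : V n)).1 (pLst t0 L a l s).1 0 = 0 := by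
  haveI : NeZero n := ⟨by omega⟩
  have ht01 : t0 ≠ 1 := by omega
  have hdisj : ∀ i, min ((eLet 1 : V n) i) ((WLc t0 L k l a (s + 1) : V n) i) = 0 := by
    obtain ⟨r, u, v, hform, hwin⟩ := WLc_shape t0 L k l a (s + 1) hl
    rw [hform]
    exact disjL hn L t0 l r u v ht02 ht0n hL2 hLn hwin
  by_cases hs1 : s < a
  · -- below the soliton : vacuum
    have hps : pLst t0 L a l s = ((eLet 1 : V n), eLet t0) := by
      unfold pLst; rw [if_neg (by omega)]
    have hx : (WLc t0 L k l a s : V n) = carf L t0 k 1 1 := WLc_low t0 L k l a s (by omega)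
    have hW : (WLc t0 L k l a (s + 1) : V n) = carf L t0 k 1 1 :=
      WLc_low t0 L k l a (s + 1) (by omega)
    obtain ⟨_, hvv, hQ⟩ := stepId hn L t0 k 1 (by omega) ht0n hk
    have hvv2 : Rvvbar (eLet t0) (carf L t0 k 1 1 : V n) = (WLc t0 L k l a (s+1), eLet t0) := by
      rw [hW]; exact hvv
    rw [hps, hx]
    obtain ⟨hstep, hPe⟩ := assembleL _ _ t0 t0 hvv2 hdisj
    exact ⟨hstep, by rw [hQ, if_neg (by omega)], hPe⟩
  · by_cases hs2 : s < a + l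
    · -- soliton site
      have hps : pLst t0 L a l s = ((eLet 1 : V n), eLet (L (l - (s - a)))) := by
        unfold pLst; rw [if_pos ⟨by omega, hs2⟩]
      have hidx1 : 1 ≤ l - (s - a) := by omega
      have hidx2 : l - (s - a) ≤ l := by omega
      have hT2 := hL2 _ hidx1 hidx2
      have hTn := hLn _ hidx1 hidx2
      have hTt0 : L (l - (s - a)) ≠ t0 := by
        rcases hlo with ⟨_, hc⟩ | ⟨_, hc⟩
        · have := hc _ hidx1 hidx2; omega
        · have := hc _ hidx1 hidx2; omega
      by_cases hnd : s - a < k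
      · -- non-depleted absorption
        have hx : (WLc t0 L k l a s : V n) =
            carf L t0 ((k - (s - a) - 1) + 1) ((l - (s - a) - 1 + 1) + 1) (l + 1) :=
          (WLc_mid t0 L k l a s (by omega) (by omega)).trans
            (carf_congr L t0 (by omega) (by omega) (by omega))
        have hW : (WLc t0 L k l a (s + 1) : V n) =
            carf L t0 (k - (s - a) - 1) (l - (s - a) - 1 + 1) (l + 1) :=
          (WLc_mid t0 L k l a (s + 1) (by omega) (by omega)).trans
            (carf_congr L t0 (by omega) (by omega) (by omega))
        have hidxeq : l - (s - a) - 1 + 1 = l - (s - a) := by omega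
        obtain ⟨_, hvv, hQ⟩ := stepAbs hn L t0 ((k - (s - a) - 1) + 1) ((l - (s - a) - 1 + 1) + 1)
          (l + 1) (L (l - (s - a))) (by omega) ht0n (by omega) (by omega) hTn hTt0
          (fun j hj1 hj2 => ⟨hmono (l - (s - a)) j hidx1 (by omega) (by omega),
            hLn j (by omega) (by omega)⟩)
          (by
            rcases hlo with ⟨_, hc⟩ | ⟨_, hc⟩
            · exact Or.inr (fun j hj1 hj2 => hc j (by omega) (by omega))
            · exact Or.inl (hc _ hidx1 hidx2))
        have hnew : (fun i => carf L t0 ((k - (s - a) - 1) + 1) ((l - (s - a) - 1 + 1) + 1)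
            (l + 1) i + eLet (L (l - (s - a))) i - eLet t0 i) = (WLc t0 L k l a (s + 1) : V n) := by
          rw [hW]
          funext z
          have h1 := congrFun (carf_absorb L t0 (k - (s - a) - 1) ((l - (s - a) - 1 + 1) + 1)
            (l + 1) (by omega) (by omega)) z
          have h2 := congrFun (carf_beta_succ L t0 (k - (s - a) - 1) ((l - (s - a) - 1 + 1) + 1)
            (l + 1)) z
          simp only [Nat.add_sub_cancel] at h1
          rw [hidxeq] at h1 h2 ⊢
          try dsimp only at h1 h2 ⊢
          linarith
        rw [hnew] at hvv
        rw [hps, hx]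
        obtain ⟨hstep, hPe⟩ := assembleL _ _ (L (l - (s - a))) t0 hvv hdisj
        refine ⟨hstep, ?_, hPe⟩
        rw [hQ]
        rcases hlo with ⟨hloeq, hc⟩ | ⟨hloeq, hc⟩
        · have := hc _ hidx1 hidx2
          rw [if_neg (by omega), if_neg (by omega)]
        · have := hc _ hidx1 hidx2
          rw [if_pos (by omega), if_pos (by omega)]
      · -- depleted absorption
        have hx : (WLc t0 L k l a s : V n) =
            carf L t0 0 ((l - (s - a) - 1 + 1) + 1) ((l - (s - a) - 1 + 1) + 1 + k) :=
          (WLc_mid t0 L k l a s (by omega) (by omega)).trans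
            (carf_congr L t0 (by omega) (by omega) (by omega))
        have hW : (WLc t0 L k l a (s + 1) : V n) =
            carf L t0 0 (l - (s - a) - 1 + 1) (l - (s - a) - 1 + 1 + k) :=
          (WLc_mid t0 L k l a (s + 1) (by omega) (by omega)).trans
            (carf_congr L t0 (by omega) (by omega) (by omega))
        have hidxeq : l - (s - a) - 1 + 1 = l - (s - a) := by omega
        have htop : (l - (s - a) - 1 + 1) + 1 + k - 1 = l - (s - a) + k := by omega
        have htopl : l - (s - a) + k ≤ l := by omega
        obtain ⟨_, hvv, hQ⟩ := stepEmitUp hn L t0 0 ((l - (s - a) - 1 + 1) + 1)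
          ((l - (s - a) - 1 + 1) + 1 + k) (L (l - (s - a))) (by omega) ht0n (by omega) (by omega)
          (fun j hj1 hj2 => by
            rw [htop]
            exact ⟨hmono (l - (s - a)) j hidx1 (by omega) (by omega),
              hmono j (l - (s - a) + k) (by omega) (by omega) htopl,
              hLn (l - (s - a) + k) (by omega) htopl⟩)
          (Or.inl rfl)
        rw [htop] at hvv
        have hnew : (fun i => carf L t0 0 ((l - (s - a) - 1 + 1) + 1)
            ((l - (s - a) - 1 + 1) + 1 + k) i + eLet (L (l - (s - a))) i -
              eLet (L (l - (s - a) + k)) i) = (WLc t0 L k l a (s + 1) : V n) := by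
          rw [hW]
          funext z
          have h1 := congrFun (carf_absorb L t0 0 ((l - (s - a) - 1 + 1) + 1)
            ((l - (s - a) - 1 + 1) + 1 + k) (by omega) (by omega)) z
          simp only [Nat.add_sub_cancel] at h1
          have h2 := congrFun (carf_emit L t0 0 (l - (s - a) - 1 + 1)
            (l - (s - a) - 1 + 1 + k) (by omega)) z
          have e2 : l - (s - a) - 1 + 1 + k + 1 = (l - (s - a) - 1 + 1) + 1 + k := by omega
          rw [e2] at h2
          rw [hidxeq] at h1 h2 ⊢
          try dsimp only at h1 h2 ⊢
          linarith
        rw [hnew] at hvv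
        rw [hps, hx]
        obtain ⟨hstep, hPe⟩ := assembleL _ _ (L (l - (s - a))) (L (l - (s - a) + k)) hvv hdisj
        refine ⟨hstep, ?_, hPe⟩
        rw [hQ]
        rcases hlo with ⟨hloeq, _⟩ | ⟨hloeq, _⟩
        · rw [if_neg (by omega)]
        · rw [if_neg (by omega)]
    · -- above the soliton
      have hps : pLst t0 L a l s = ((eLet 1 : V n), eLet t0) := by
        unfold pLst; rw [if_neg (by omega)]
      by_cases hq : s - a - l < min k l
      · -- deposit site
        set q := s - a - l with hqdef
        set e := min k l - q - 1 with hedef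
        have hel : e + 1 ≤ l := by omega
        have htop : e + 1 + 1 - 1 = e + 1 := by omega
        have hx : (WLc t0 L k l a s : V n) =
            carf L t0 (k - min k l + q) 1 (e + 1 + 1) :=
          (WLc_hi t0 L k l a s (by omega)).trans
            (carf_congr L t0 (by omega) rfl (by omega))
        have hW : (WLc t0 L k l a (s + 1) : V n) =
            carf L t0 ((k - min k l + q) + 1) 1 (e + 1) :=
          (WLc_hi t0 L k l a (s + 1) (by omega)).trans
            (carf_congr L t0 (by omega) rfl (by omega))
        have hnew : (fun i => carf L t0 (k - min k l + q) 1 (e + 1 + 1) i +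
            eLet t0 i - eLet (L (e + 1)) i) = (WLc t0 L k l a (s + 1) : V n) := by
          rw [hW]
          funext z
          have h1 := congrFun (carf_emit L t0 (k - min k l + q) 1 (e + 1) (by omega)) z
          have h2 := congrFun (carf_beta_succ L t0 (k - min k l + q) 1 (e + 1)) z
          try dsimp only at h1 h2 ⊢
          linarith
        rcases hlo with ⟨hloeq, hc⟩ | ⟨hloeq, hc⟩
        · -- letters below t0 : stepEmitDown, energy 1
          obtain ⟨_, hvv, hQ⟩ := stepEmitDown hn L t0 (k - min k l + q) 1 (e + 1 + 1)
            ht0n (by omega)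
            (fun j hj1 hj2 => by
              rw [htop]
              exact ⟨by have := hL2 j (by omega) (by omega); omega,
                hmono j (e + 1) (by omega) (by omega) hel, hc (e + 1) (by omega) hel⟩)
          rw [htop] at hvv
          rw [hnew] at hvv
          rw [hps, hx]
          obtain ⟨hstep, hPe⟩ := assembleL _ _ t0 (L (e + 1)) hvv hdisj
          refine ⟨hstep, ?_, hPe⟩
          rw [hQ, if_pos (by omega)]
        · -- letters above t0 : stepEmitUp, energy 0
          obtain ⟨_, hvv, hQ⟩ := stepEmitUp hn L t0 (k - min k l + q) 1 (e + 1 + 1) t0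
            (by omega) ht0n (by omega) (by omega)
            (fun j hj1 hj2 => by
              rw [htop]
              exact ⟨by have := hc j (by omega) (by omega); omega,
                hmono j (e + 1) (by omega) (by omega) hel, hLn (e + 1) (by omega) hel⟩)
            (Or.inr rfl)
          rw [htop] at hvv
          rw [hnew] at hvv
          rw [hps, hx]
          obtain ⟨hstep, hPe⟩ := assembleL _ _ t0 (L (e + 1)) hvv hdisj
          refine ⟨hstep, ?_, hPe⟩
          rw [hQ, if_neg (by omega)]
      · -- vacuum far above
        have hx : (WLc t0 L k l a s : V n) = carf L t0 k 1 1 :=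
          (WLc_hi t0 L k l a s (by omega)).trans
            (carf_congr L t0 (by omega) rfl (by omega))
        have hW : (WLc t0 L k l a (s + 1) : V n) = carf L t0 k 1 1 :=
          (WLc_hi t0 L k l a (s + 1) (by omega)).trans
            (carf_congr L t0 (by omega) rfl (by omega))
        obtain ⟨_, hvv, hQ⟩ := stepId hn L t0 k 1 (by omega) ht0n hk
        have hvv2 : Rvvbar (eLet t0) (carf L t0 k 1 1 : V n) =
            (WLc t0 L k l a (s+1), eLet t0) := by
          rw [hW]; exact hvv
        rw [hps, hx]
        obtain ⟨hstep, hPe⟩ := assembleL _ _ t0 t0 hvv2 hdisj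
        refine ⟨hstep, ?_, hPe⟩
        rw [hQ]
        rcases hlo with ⟨hloeq, _⟩ | ⟨hloeq, _⟩
        · rw [if_neg (by omega)]
        · rw [if_neg (by omega)]

end ScenL
section ScenL2

variable {n : ℕ}

lemma siteL_down (hn : 3 ≤ n) (k l a t0 : ℕ) (L : ℕ → ℕ) (hk : 1 ≤ k)
    (ht02 : 2 ≤ t0) (ht0n : t0 ≤ n)
    (hL2 : ∀ j, 1 ≤ j → j ≤ l → 2 ≤ L j) (hLn : ∀ j, 1 ≤ j → j ≤ l → L j ≤ n) (s : ℕ) :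
    stepRfull (uVec k) (pLst t0 L a l s) = (pLst t0 L a l s, (uVec k : V n)) ∧
    Qe (uVec k : V n) (pLst t0 L a l s).1 0 = 0 ∧
    Pe (Rbar (uVec k : V n) (pLst t0 L a l s).1).2 (pLst t0 L a l s).2 0 = 0 := by
  haveI : NeZero n := ⟨by omega⟩
  obtain ⟨τ, hτ2, hτn, hps⟩ : ∃ τ, 2 ≤ τ ∧ τ ≤ n ∧
      pLst t0 L a l s = ((eLet 1 : V n), eLet τ) := by
    unfold pLst
    split
    · exact ⟨L (l - (s - a)), hL2 _ (by omega) (by omega), hLn _ (by omega) (by omega), rfl⟩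
    · exact ⟨t0, ht02, ht0n, rfl⟩
  have hu : (uVec k : V n) = carf L 1 k 1 1 := uVec_eq_carf L k 1
  obtain ⟨hR, _, hQ⟩ := stepId hn L 1 k 1 (by omega) (by omega) hk
  have hR2 : Rbar (uVec k : V n) (eLet 1) = (eLet 1, uVec k) := by
    rw [hu]; exact hR
  have hdisj : ∀ i, min ((uVec k : V n) i) ((eLet τ : V n) i) = 0 := by
    intro i
    by_cases h : i = ((τ : ℕ) : ZMod n)
    · have hz : (uVec k : V n) ((τ : ℕ) : ZMod n) = 0 := by
        rw [hu]
        apply carf_apply_zero hn L 1 k 1 1 τ (by omega) hτn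
        · right
          rw [natCast_inj_of (by omega) (by omega) hτn (by omega) (by omega)]
          omega
        · intro j hj1 hj2; omega
      rw [h, hz]
      exact min_eq_left (eLet_nonneg _ _)
    · rw [eLet_apply_ne h]
      exact min_eq_right (by rw [hu]; exact carf_nonneg _ _ _ _ _ _)
  obtain ⟨hstep, hPe⟩ := assembleR (uVec k) (uVec k) 1 1 τ hR2 hdisj
  rw [hps]
  refine ⟨hstep, ?_, hPe⟩
  rw [hu]
  exact hQ

lemma vCarL (hn : 3 ≤ n) (k l a t0 : ℕ) (L : ℕ → ℕ) (hk : 1 ≤ k)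
    (ht02 : 2 ≤ t0) (ht0n : t0 ≤ n)
    (hL2 : ∀ j, 1 ≤ j → j ≤ l → 2 ≤ L j) (hLn : ∀ j, 1 ≤ j → j ≤ l → L j ≤ n) (N : ℕ) :
    ∀ m, vCar (pLst t0 L a l) (uVec k) N m = (uVec k : V n) := by
  intro m
  induction m with
  | zero => rfl
  | succ m ih =>
    show (stepRfull (vCar (pLst t0 L a l) (uVec k) N m) (pLst t0 L a l (N - 1 - m))).2 = _
    rw [ih, (siteL_down hn k l a t0 L hk ht02 ht0n hL2 hLn (N - 1 - m)).1]

lemma pdagL (hn : 3 ≤ n) (k l a t0 : ℕ) (L : ℕ → ℕ) (hk : 1 ≤ k)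
    (ht02 : 2 ≤ t0) (ht0n : t0 ≤ n)
    (hL2 : ∀ j, 1 ≤ j → j ≤ l → 2 ≤ L j) (hLn : ∀ j, 1 ≤ j → j ≤ l → L j ≤ n) (N s : ℕ) :
    pdag (pLst t0 L a l) (uVec k) N s = (pLst t0 L a l s : V n × V n) := by
  show (stepRfull (vCar (pLst t0 L a l) (uVec k) N (N - 1 - s)) (pLst t0 L a l s)).1 = _
  rw [vCarL hn k l a t0 L hk ht02 ht0n hL2 hLn N (N - 1 - s),
    (siteL_down hn k l a t0 L hk ht02 ht0n hL2 hLn s).1]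

lemma wCarL (hn : 3 ≤ n) (k l a t0 lo : ℕ) (L : ℕ → ℕ) (hk : 1 ≤ k) (hl : 1 ≤ l)
    (ht02 : 2 ≤ t0) (ht0n : t0 ≤ n)
    (hL2 : ∀ j, 1 ≤ j → j ≤ l → 2 ≤ L j) (hLn : ∀ j, 1 ≤ j → j ≤ l → L j ≤ n)
    (hmono : ∀ j j', 1 ≤ j → j ≤ j' → j' ≤ l → L j ≤ L j')
    (hlo : (lo = a + l ∧ ∀ j, 1 ≤ j → j ≤ l → L j < t0) ∨
      (lo = a ∧ ∀ j, 1 ≤ j → j ≤ l → t0 < L j)) (N : ℕ) :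
    ∀ m, wCar (pdag (pLst t0 L a l) (uVec k) N) (carf L t0 k 1 1) m =
      (WLc t0 L k l a m : V n) := by
  intro m
  induction m with
  | zero => exact (WLc_low t0 L k l a 0 (by omega)).symm
  | succ m ih =>
    show (stepLfull (wCar (pdag (pLst t0 L a l) (uVec k) N) (carf L t0 k 1 1) m)
      (pdag (pLst t0 L a l) (uVec k) N m)).2 = _
    rw [ih, pdagL hn k l a t0 L hk ht02 ht0n hL2 hLn N m,
      (siteL_up hn k l a t0 lo L hk hl ht02 ht0n hL2 hLn hmono hlo m).1]

lemma EtermL (κ : V n → V n) (k l a t0 lo : ℕ) (L : ℕ → ℕ) (hk : 1 ≤ k) (hl : 1 ≤ l)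
    (hn : 3 ≤ n) (ht02 : 2 ≤ t0) (ht0n : t0 ≤ n)
    (hL2 : ∀ j, 1 ≤ j → j ≤ l → 2 ≤ L j) (hLn : ∀ j, 1 ≤ j → j ≤ l → L j ≤ n)
    (hmono : ∀ j j', 1 ≤ j → j ≤ j' → j' ≤ l → L j ≤ L j')
    (hlo : (lo = a + l ∧ ∀ j, 1 ≤ j → j ≤ l → L j < t0) ∨
      (lo = a ∧ ∀ j, 1 ≤ j → j ≤ l → t0 < L j)) (N : ℕ)
    (hκu : κ (uVec k) = carf L t0 k 1 1) (s : ℕ) :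
    Eterm κ k (pLst t0 L a l) N s = if lo ≤ s ∧ s < lo + min k l then 1 else 0 := by
  obtain ⟨_, hQ1, hP1⟩ := siteL_down hn k l a t0 L hk ht02 ht0n hL2 hLn s
  obtain ⟨_, hQ2, hP2⟩ := siteL_up hn k l a t0 lo L hk hl ht02 ht0n hL2 hLn hmono hlo s
  have hv := vCarL hn k l a t0 L hk ht02 ht0n hL2 hLn N
  have hq := pdagL hn k l a t0 L hk ht02 ht0n hL2 hLn N s
  have hw := wCarL hn k l a t0 lo L hk hl ht02 ht0n hL2 hLn hmono hlo N s
  unfold Eterm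
  dsimp only
  rw [hv (N - 1 - s), hq, hv N, hκu, hw, hQ1, hP1, hQ2, hP2]
  ring

/-- The indicator sum. -/
lemma sum_ind (lo c M : ℕ) (h : lo + c ≤ M) :
    (∑ s ∈ Finset.range M, if lo ≤ s ∧ s < lo + c then (1 : ℤ) else 0) = (c : ℤ) := by
  have hcongr : ∀ s ∈ Finset.range M, (if lo ≤ s ∧ s < lo + c then (1 : ℤ) else 0) =
      if s ∈ Finset.Ico lo (lo + c) then (1 : ℤ) else 0 := by
    intro s _
    exact if_congr (Iff.symm Finset.mem_Ico) rfl rfl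
  rw [Finset.sum_congr rfl hcongr, Finset.sum_ite_mem]
  rw [Finset.inter_eq_right.mpr
    (fun x hx => Finset.mem_range.mpr (by have := Finset.mem_Ico.mp hx; omega))]
  rw [Finset.sum_const, Nat.card_Ico, (by omega : lo + c - lo = c)]
  simp

/-- Generic evaluation of `El` for a state whose energy density is an indicator and whose
final downward carrier is the highest vector. -/
lemma El_eval (κ : V n → V n) (I : V n → ℤ) (k : ℕ) (p : ℕ → V n × V n) (lo c : ℕ)
    (hvac : ∃ N0 : ℕ, ∀ s, N0 ≤ s → p s = vacOf κ)
    (hNlb : ∀ N : ℕ, (∀ s, N ≤ s → p s = vacOf κ) →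
      ∀ s, Eterm κ k p N s = if lo ≤ s ∧ s < lo + c then 1 else 0)
    (hvN : ∀ N : ℕ, (∀ s, N ≤ s → p s = vacOf κ) → vCar p (uVec k) N N = (uVec k : V n)) :
    El κ I k p = (c : ℤ) := by
  unfold El
  rw [dif_pos hvac]
  have hspec := hvac.choose_spec
  have hE := hNlb hvac.choose hspec
  have hsum : ∀ M, lo + c ≤ M →
      (∑ s ∈ Finset.range M, Eterm κ k p hvac.choose s) = (c : ℤ) := by
    intro M hM
    rw [Finset.sum_congr rfl (fun s _ => hE s)]
    exact sum_ind lo c M hM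
  have h2 : ∃ M : ℕ, ∀ M', M ≤ M' →
      (∑ s ∈ Finset.range M', Eterm κ k p hvac.choose s) =
        ∑ s ∈ Finset.range M, Eterm κ k p hvac.choose s := by
    refine ⟨lo + c, fun M' hM' => ?_⟩
    rw [hsum M' hM', hsum (lo + c) le_rfl]
  rw [dif_pos h2]
  have hstab := h2.choose_spec (max h2.choose (lo + c)) (le_max_left _ _)
  rw [← hstab, hsum (max h2.choose (lo + c)) (le_max_right _ _)]
  rw [hvN hvac.choose hspec]
  ring

lemma pRst_ne (hn : 3 ≤ n) (k l a t0 : ℕ) (L : ℕ → ℕ) (hl : 1 ≤ l)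
    (hL2 : ∀ j, 1 ≤ j → j ≤ l → 2 ≤ L j) (hLn : ∀ j, 1 ≤ j → j ≤ l → L j ≤ n) :
    pRst t0 L a l (a + l - 1) ≠ ((eLet 1 : V n), eLet t0) := by
  haveI : NeZero n := ⟨by omega⟩
  unfold pRst
  rw [if_pos (by omega)]
  intro hc
  have h1 := congrFun (congrArg Prod.fst hc) ((1 : ℕ) : ZMod n)
  dsimp only at h1
  rw [(by omega : a + l - 1 - a + 1 = l)] at h1
  rw [eLet_apply_eq, eLet_apply_ne] at h1
  · exact absurd h1 (by norm_num)
  · rw [Ne, natCast_inj_of (by omega) (by omega) (by omega)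
      (by have := hL2 l hl le_rfl; omega) (hLn l hl le_rfl)]
    have := hL2 l hl le_rfl
    omega

lemma pLst_ne (hn : 3 ≤ n) (k l a t0 : ℕ) (L : ℕ → ℕ) (hl : 1 ≤ l) (ht02 : 2 ≤ t0)
    (ht0n : t0 ≤ n)
    (hL2 : ∀ j, 1 ≤ j → j ≤ l → 2 ≤ L j) (hLn : ∀ j, 1 ≤ j → j ≤ l → L j ≤ n)
    (hLt0 : ∀ j, 1 ≤ j → j ≤ l → L j ≠ t0) :
    pLst t0 L a l (a + l - 1) ≠ ((eLet 1 : V n), eLet t0) := by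
  haveI : NeZero n := ⟨by omega⟩
  unfold pLst
  rw [if_pos (by omega)]
  intro hc
  have h1 := congrFun (congrArg Prod.snd hc) ((t0 : ℕ) : ZMod n)
  dsimp only at h1
  rw [(by omega : l - (a + l - 1 - a) = 1)] at h1
  rw [eLet_apply_eq, eLet_apply_ne] at h1
  · exact absurd h1 (by norm_num)
  · rw [Ne, natCast_inj_of (by omega) (by omega) ht0n
      (by have := hL2 1 le_rfl hl; omega) (hLn 1 le_rfl hl)]
    exact fun hcc => (hLt0 1 le_rfl hl) hcc.symm

lemma ElR (κ : V n → V n) (I : V n → ℤ) (k l a t0 : ℕ) (L : ℕ → ℕ) (H : HypR n k l a t0 L)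
    (hvac : vacOf κ = ((eLet 1 : V n), eLet t0))
    (hκu : κ (uVec k) = carf L t0 k 1 1) :
    El κ I k (pRst t0 L a l) = ((min k l : ℕ) : ℤ) := by
  have hNge : ∀ N : ℕ, (∀ s, N ≤ s → pRst t0 L a l s = vacOf κ) → a + l ≤ N := by
    intro N hprop
    by_contra hcon
    have := hprop (a + l - 1) (by omega)
    rw [hvac] at this
    exact pRst_ne H.hn k l a t0 L H.hl H.hL2 H.hLn this
  apply El_eval κ I k (pRst t0 L a l) (a + l - min k l) (min k l)
  · refine ⟨a + l, fun s hs => ?_⟩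
    rw [hvac]
    unfold pRst
    rw [if_neg (by omega)]
  · intro N hprop s
    rw [EtermR κ k l a t0 L H N (hNge N hprop) hκu s]
    exact if_congr (by omega) rfl rfl
  · intro N hprop
    rw [vCarR k l a t0 L H N (hNge N hprop) N le_rfl, (by omega : N - N = 0),
      VRc_zero L k l a H.ha]

lemma ElL (κ : V n → V n) (I : V n → ℤ) (k l a t0 lo : ℕ) (L : ℕ → ℕ)
    (H : HypR n k l a t0 L)
    (hlo : (lo = a + l ∧ ∀ j, 1 ≤ j → j ≤ l → L j < t0) ∨
      (lo = a ∧ ∀ j, 1 ≤ j → j ≤ l → t0 < L j))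
    (hvac : vacOf κ = ((eLet 1 : V n), eLet t0))
    (hκu : κ (uVec k) = carf L t0 k 1 1) :
    El κ I k (pLst t0 L a l) = ((min k l : ℕ) : ℤ) := by
  apply El_eval κ I k (pLst t0 L a l) lo (min k l)
  · refine ⟨a + l, fun s hs => ?_⟩
    rw [hvac]
    unfold pLst
    rw [if_neg (by omega)]
  · intro N hprop s
    exact EtermL κ k l a t0 lo L H.hk H.hl H.hn H.ht02 H.ht0n H.hL2 H.hLn H.hmono hlo N hκu s
  · intro N hprop
    exact vCarL H.hn k l a t0 L H.hk H.ht02 H.ht0n H.hL2 H.hLn N N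

end ScenL2
section Kappa

variable {n : ℕ}

lemma uVec_mul (k : ℕ) (w : ZMod n) : (uVec k : V n) w = (k : ℤ) * eLet 1 w := by
  unfold uVec eLet
  rw [Nat.cast_one]
  split <;> ring

lemma perm_transfer (κ : V n → V n) (g : ZMod n → ZMod n) (t0 : ℕ)
    (hκ : ∀ x i, κ x i = x (g i)) (h1 : κ (eLet 1) = eLet t0) (k : ℕ) :
    κ (uVec k) = carf (fun _ => 0) t0 k 1 1 := by
  rw [carf_empty]
  funext z
  rw [hκ, uVec_mul k (g z)]
  have h2 := congrFun h1 z
  rw [hκ] at h2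
  rw [h2]

lemma cast_two' (hn : 3 ≤ n) : ((2 : ℕ) : ZMod n) = 2 := by push_cast; ring

lemma val_two' (hn : 3 ≤ n) : (2 : ZMod n).val = 2 := by
  haveI : NeZero n := ⟨by omega⟩
  rw [← cast_two' hn]
  exact ZMod.val_cast_of_lt (by omega)

lemma rotL_e1 (hn : 3 ≤ n) : (rotL : V n → V n) (eLet 1) = eLet n := by
  haveI : NeZero n := ⟨by omega⟩
  funext i
  unfold rotL eLet
  have hcn : ((n : ℕ) : ZMod n) = 0 := ZMod.natCast_self n
  have hc1 : ((1 : ℕ) : ZMod n) = 1 := Nat.cast_one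
  by_cases h : i = (0 : ZMod n)
  · rw [if_pos (by rw [h, hc1]; ring), if_pos (by rw [h, hcn])]
  · rw [if_neg (by rw [hc1]; intro hc; exact h (by linear_combination hc)),
      if_neg (by rw [hcn]; exact h)]

lemma sw1n_e1 (hn : 3 ≤ n) : (sw1n : V n → V n) (eLet 1) = eLet n := by
  haveI : NeZero n := ⟨by omega⟩
  funext i
  unfold sw1n eLet
  have hcn : ((n : ℕ) : ZMod n) = 0 := ZMod.natCast_self n
  have hc1 : ((1 : ℕ) : ZMod n) = 1 := Nat.cast_one
  by_cases hpar : i.val % 2 = 1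
  · rw [if_pos hpar]
    rw [if_neg, if_neg]
    · rw [hcn]
      intro hc
      rw [hc] at hpar
      rw [ZMod.val_zero] at hpar
      omega
    · rw [hc1]
      intro hc
      have h2 : i = (2 : ZMod n) := by linear_combination hc
      rw [h2, val_two' hn] at hpar
      omega
  · rw [if_neg hpar]
    apply if_congr _ rfl rfl
    rw [hc1, hcn]
    constructor
    · intro hc; linear_combination hc
    · intro hc; rw [hc]; ring

lemma sw12_e1 (hn : 3 ≤ n) : (sw12 : V n → V n) (eLet 1) = eLet 2 := by
  haveI : NeZero n := ⟨by omega⟩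
  funext i
  unfold sw12 eLet
  have hc2 : ((2 : ℕ) : ZMod n) = 2 := cast_two' hn
  have hc1 : ((1 : ℕ) : ZMod n) = 1 := Nat.cast_one
  by_cases hpar : i.val % 2 = 1
  · rw [if_pos hpar]
    rw [if_neg, if_neg]
    · rw [hc2]
      intro hc
      rw [hc, val_two' hn] at hpar
      omega
    · rw [hc1]
      intro hc
      have h0 : i = (0 : ZMod n) := by linear_combination hc
      rw [h0, ZMod.val_zero] at hpar
      omega
  · rw [if_neg hpar]
    apply if_congr _ rfl rfl
    rw [hc1, hc2]
    constructor
    · intro hc; linear_combination hc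
    · intro hc; rw [hc]; ring

lemma rotL_perm : ∀ (x : V n) (i : ZMod n), rotL x i = x (i + 1) := fun _ _ => rfl

lemma sw1n_perm : ∀ (x : V n) (i : ZMod n),
    sw1n x i = x (if i.val % 2 = 1 then i - 1 else i + 1) := by
  intro x i
  unfold sw1n
  split <;> rfl

lemma sw12_perm : ∀ (x : V n) (i : ZMod n),
    sw12 x i = x (if i.val % 2 = 1 then i + 1 else i - 1) := by
  intro x i
  unfold sw12
  split <;> rfl

lemma carf_L_irrel (L L' : ℕ → ℕ) (β r u : ℕ) :
    (carf L β r u u : V n) = carf L' β r u u := carf_empty' L L' β r u u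

end Kappa
section Main

variable {n : ℕ}

lemma main_case (κ : V n → V n) (I : V n → ℤ) (t0 c : ℕ) (lab : ℕ → ℕ) (l : ℕ)
    (hn : 3 ≤ n) (hl : 1 ≤ l) (ht02 : 2 ≤ t0) (ht0n : t0 ≤ n) (hc1 : 1 ≤ c)
    (hlab1 : ∀ j, 1 ≤ j → j ≤ l → 1 ≤ lab j)
    (hLn : ∀ j, 1 ≤ j → j ≤ l → lab j + c ≤ n)
    (hLt0 : ∀ j, 1 ≤ j → j ≤ l → lab j + c ≠ t0)
    (hmono : ∀ j j', 1 ≤ j → j ≤ j' → j' ≤ l → lab j ≤ lab j')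
    (hside : (∀ j, 1 ≤ j → j ≤ l → lab j + c < t0) ∨ (∀ j, 1 ≤ j → j ≤ l → t0 < lab j + c))
    (hvκ : κ (eLet 1) = eLet t0)
    (hκu : ∀ k : ℕ, κ (uVec k) = carf (fun j => lab j + c) t0 k 1 1)
    (k : ℕ) (hk : 1 ≤ k) (a : ℕ) (ha : k + l + 2 ≤ a) :
    El κ I k (fun s => if a ≤ s ∧ s < a + l
        then (eLet (lab (s - a + 1) + c), (vacOf κ).2) else vacOf κ) =
      ((min k l : ℕ) : ℤ) ∧
    El κ I k (fun s => if a ≤ s ∧ s < a + l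
        then ((vacOf κ).1, eLet (lab (l - (s - a)) + c)) else vacOf κ) =
      ((min k l : ℕ) : ℤ) := by
  have H : HypR n k l a t0 (fun j => lab j + c) :=
    ⟨hn, hk, hl, ht02, ht0n,
      fun j h1 h2 => by have := hlab1 j h1 h2; omega,
      hLn, hLt0,
      fun j j' h1 h2 h3 => by have := hmono j j' h1 h2 h3; omega,
      by have := Nat.min_le_left k l; omega⟩
  have hvac : vacOf κ = ((eLet 1 : V n), eLet t0) := by
    unfold vacOf
    rw [hvκ]
  constructor
  · have hstate : (fun s => if a ≤ s ∧ s < a + l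
        then ((eLet (lab (s - a + 1) + c) : V n), (vacOf κ).2) else vacOf κ) =
        pRst t0 (fun j => lab j + c) a l := by
      funext s
      unfold pRst
      split
      · rw [hvac]
      · rw [hvac]
    rw [hstate]
    exact ElR κ I k l a t0 _ H hvac (hκu k)
  · have hstate : (fun s => if a ≤ s ∧ s < a + l
        then ((vacOf κ).1, (eLet (lab (l - (s - a)) + c) : V n)) else vacOf κ) =
        pLst t0 (fun j => lab j + c) a l := by
      funext s
      unfold pLst
      split
      · rw [hvac]
      · rw [hvac]
    rw [hstate]
    rcases hside with h | h
    · exact ElL κ I k l a t0 (a + l) _ H (Or.inl ⟨rfl, h⟩) hvac (hκu k)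
    · exact ElL κ I k l a t0 a _ H (Or.inr ⟨rfl, h⟩) hvac (hκu k)

end Main

/-- Lemma 4.1(1), energies of a one-soliton state.
Fix `n ≥ 3`, one of the three admissible `(κ, I)` (with letter shift `c = 1` for
Rotateleft and Switch₁ₙ, `c = 2` for Switch₁₂), a length `l ≥ 1` and a label
`1 ≤ i_1 ≤ ⋯ ≤ i_l ≤ n−2`.  For `a ≥ 0`, let `p` be the state equal to `vac` everywhere
except `p_{a+j}` for `j = 1, …, l`, where it carries the soliton:
`p_{a+j} = (i_j + c) ⊗ vac₂` for the right soliton, and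
`p_{a+j} = vac₁ ⊗ \overline{i_{l+1−j} + c}` for the left soliton.  Then, provided the
soliton is surrounded by sufficiently many vacuum sites (there is `a₀`, depending on
`n, l, k` and the label, such that the following holds for all `a ≥ a₀`), one has
`E_k(p) = min(k, l)` for every `k ≥ 1`.  (Sites are indexed `0, 1, 2, …` with site `0`
adjacent to the reflecting end, so `p_{a+j}` is the site of index `a + j − 1`.) -/
theorem one_soliton_energy (n : ℕ) (hn : 3 ≤ n) (κ : V n → V n) (I : V n → ℤ) (c : ℕ)
    (hκI : (κ = rotL ∧ I = Irot ∧ c = 1) ∨ (Even n ∧ κ = sw1n ∧ I = I1n ∧ c = 1) ∨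
      (Even n ∧ κ = sw12 ∧ I = I12 ∧ c = 2))
    (l : ℕ) (hl : 1 ≤ l) (lab : ℕ → ℕ)
    (hlab : ∀ j, 1 ≤ j → j ≤ l → 1 ≤ lab j ∧ lab j ≤ n - 2)
    (hmono : ∀ j j', 1 ≤ j → j ≤ j' → j' ≤ l → lab j ≤ lab j') :
    ∀ k : ℕ, 1 ≤ k → ∃ a₀ : ℕ, ∀ a, a₀ ≤ a →
      El κ I k (fun s => if a ≤ s ∧ s < a + l
          then (eLet (lab (s - a + 1) + c), (vacOf κ).2) else vacOf κ) =
          ((min k l : ℕ) : ℤ) ∧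
        El κ I k (fun s => if a ≤ s ∧ s < a + l
            then ((vacOf κ).1, eLet (lab (l - (s - a)) + c)) else vacOf κ) =
          ((min k l : ℕ) : ℤ) := by
  intro k hk
  refine ⟨k + l + 2, fun a ha => ?_⟩
  rcases hκI with ⟨hκ, hI, hc⟩ | ⟨hev, hκ, hI, hc⟩ | ⟨hev, hκ, hI, hc⟩
  · subst hκ; subst hc
    exact main_case rotL I n 1 lab l hn hl (by omega) le_rfl le_rfl
      (fun j h1 h2 => (hlab j h1 h2).1)
      (fun j h1 h2 => by have := (hlab j h1 h2).2; omega)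
      (fun j h1 h2 => by have := (hlab j h1 h2).2; omega)
      hmono
      (Or.inl (fun j h1 h2 => by have := (hlab j h1 h2).2; omega))
      (rotL_e1 hn)
      (fun k' => (perm_transfer rotL (fun i => i + 1) n rotL_perm (rotL_e1 hn) k').trans
        (carf_L_irrel _ _ _ _ _))
      k hk a ha
  · subst hκ; subst hc
    exact main_case sw1n I n 1 lab l hn hl (by omega) le_rfl le_rfl
      (fun j h1 h2 => (hlab j h1 h2).1)
      (fun j h1 h2 => by have := (hlab j h1 h2).2; omega)
      (fun j h1 h2 => by have := (hlab j h1 h2).2; omega)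
      hmono
      (Or.inl (fun j h1 h2 => by have := (hlab j h1 h2).2; omega))
      (sw1n_e1 hn)
      (fun k' => (perm_transfer sw1n (fun i => if i.val % 2 = 1 then i - 1 else i + 1) n
        sw1n_perm (sw1n_e1 hn) k').trans (carf_L_irrel _ _ _ _ _))
      k hk a ha
  · subst hκ; subst hc
    exact main_case sw12 I 2 2 lab l hn hl (by omega) (by omega) (by omega)
      (fun j h1 h2 => (hlab j h1 h2).1)
      (fun j h1 h2 => by have := (hlab j h1 h2).2; omega)
      (fun j h1 h2 => by have := (hlab j h1 h2).1; omega)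
      hmono
      (Or.inr (fun j h1 h2 => by have := (hlab j h1 h2).1; omega))
      (sw12_e1 hn)
      (fun k' => (perm_transfer sw12 (fun i => if i.val % 2 = 1 then i + 1 else i - 1) 2
        sw12_perm (sw12_e1 hn) k').trans (carf_L_irrel _ _ _ _ _))
      k hk a ha

end BBS
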